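/- arXiv:2309.09391 — 4 statements merged into one kernel-verified Lean document; each statement's English description precedes it below -/
import Mathlib

section
/- Let R : ℝⁿ → (Fin n → Fin n → Matrix (Fin n) (Fin n) ℝ) be a smooth map, written R^a_{bμν}(x), with R^a_{bμν} = −R^a_{bνμ} and R^a_{bμν} = −R^b_{aμν}, and define ω^a_{bμ}(x) := ∫₀¹ t ∑_ν x^ν R^a_{bνμ}(tx) dt. Suppose R satisfies the 2nd Bianchi identity for curvature: for all x and all a, b, μ, ν, ρ, ∂_μ R^a_{bνρ} + ∂_ν R^a_{bρμ} + ∂_ρ R^a_{bμν} + ∑_c (ω^a_{cμ} R^c_{bνρ} − R^a_{cνρ} ω^c_{bμ} + ω^a_{cν} R^c_{bρμ} − R^a_{cρμ} ω^c_{bν} + ω^a_{cρ} R^c_{bμν} − R^a_{cμν} ω^c_{bρ}) = 0. Then R is the curvature of ω: R^a_{bμν} = ∂_μ ω^a_{bν} − ∂_ν ω^a_{bμ} + ∑_c (ω^a_{cμ} ω^c_{bν} − ω^a_{cν} ω^c_{bμ}), each matrix ω_μ(x) is antisymmetric, and ω satisfies the Fock–Schwinger gauge condition ∑_μ x^μ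 ω^a_{bμ}(x) = 0. -/
set_option maxHeartbeats 1000000

lemma clm_eval_sum {n : ℕ} (L : (Fin n → ℝ) →L[ℝ] ℝ) (x : Fin n → ℝ) :
    L x = ∑ τ, x τ * L (Pi.single τ 1) := by
  conv_lhs => rw [← Finset.univ_sum_single x, map_sum]
  refine Finset.sum_congr rfl fun τ _ => ?_
  have h : Pi.single τ (x τ) = x τ • (Pi.single τ (1:ℝ) : Fin n → ℝ) := by
    funext j
    by_cases hj : j = τ <;> simp [Pi.single_apply, hj]
  rw [h, map_smul, smul_eq_mul]

lemma sum_sum_antisymm {n : ℕ} (f : Fin n → Fin n → ℝ) (hf : ∀ μ ν, f μ ν = - f ν μ) :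
    (∑ μ, ∑ ν, f μ ν) = 0 := by
  have h : (∑ μ, ∑ ν, f μ ν) = - ∑ μ, ∑ ν, f μ ν := by
    conv_lhs => rw [Finset.sum_comm]
    rw [← Finset.sum_neg_distrib]
    refine Finset.sum_congr rfl fun ν _ => ?_
    rw [← Finset.sum_neg_distrib]
    exact Finset.sum_congr rfl fun μ _ => hf μ ν
  linarith

lemma pd_neg' {n : ℕ} (μ : Fin n) (f : (Fin n → ℝ) → ℝ) (x : Fin n → ℝ) :
    fderiv ℝ (fun y => -f y) x (Pi.single μ 1) = - fderiv ℝ f x (Pi.single μ 1) := by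
  rw [fderiv_fun_neg]; simp

open MeasureTheory intervalIntegral

variable {n : ℕ}

lemma Rcont (R : (Fin n → ℝ) → Fin n → Fin n → Matrix (Fin n) (Fin n) ℝ)
    (hRsmooth : ∀ μ ν a b, ContDiff ℝ (⊤ : ℕ∞) fun x => R x μ ν a b)
    (x : Fin n → ℝ) (ν μ : Fin n) (a b : Fin n) :
    Continuous fun t : ℝ => R (t • x) ν μ a b :=
  (hRsmooth ν μ a b).continuous.comp (continuous_id.smul continuous_const)

lemma gauge_lemma (R : (Fin n → ℝ) → Fin n → Fin n → Matrix (Fin n) (Fin n) ℝ)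
    (hRsmooth : ∀ μ ν a b, ContDiff ℝ (⊤ : ℕ∞) fun x => R x μ ν a b)
    (hanti : ∀ (x : Fin n → ℝ) μ ν a b, R x μ ν a b = - R x ν μ a b)
    (ω : (Fin n → ℝ) → Fin n → Matrix (Fin n) (Fin n) ℝ)
    (hω : ∀ (x : Fin n → ℝ) μ a b,
      ω x μ a b = ∫ t in (0:ℝ)..1, t • ∑ ν, x ν * R (t • x) ν μ a b) :
    ∀ (x : Fin n → ℝ) a b, ∑ μ, x μ * ω x μ a b = 0 := by
  intro x a b
  have hcont : ∀ μ : Fin n, Continuous fun t : ℝ => t • ∑ ν, x ν * R (t • x) ν μ a b := by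
    intro μ
    exact continuous_id.smul (continuous_finset_sum _ fun ν _ =>
      continuous_const.mul (Rcont R hRsmooth x ν μ a b))
  have h1 : ∀ μ : Fin n, x μ * ω x μ a b
      = ∫ t in (0:ℝ)..1, x μ * (t • ∑ ν, x ν * R (t • x) ν μ a b) := by
    intro μ
    rw [hω, intervalIntegral.integral_const_mul]
  calc ∑ μ, x μ * ω x μ a b
      = ∫ t in (0:ℝ)..1, ∑ μ, x μ * (t • ∑ ν, x ν * R (t • x) ν μ a b) := by
        rw [intervalIntegral.integral_finset_sum]
        · exact Finset.sum_congr rfl fun μ _ => h1 μ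
        · exact fun μ _ => (continuous_const.mul (hcont μ)).intervalIntegrable _ _
    _ = 0 := by
        have : ∀ t : ℝ, ∑ μ, x μ * (t • ∑ ν, x ν * R (t • x) ν μ a b) = 0 := by
          intro t
          have := sum_sum_antisymm (fun μ ν => x μ * (t * (x ν * R (t • x) ν μ a b)))
            (fun μ ν => by rw [hanti (t • x) ν μ a b]; ring)
          simpa [smul_eq_mul, Finset.mul_sum] using this
        simp only [this]
        simp



open MeasureTheory intervalIntegral Metric

/-- The partial derivative `∂_μ f` of a real-valued function on `ℝⁿ`. -/
noncomputable def pd {n : ℕ} (μ : Fin n) (f : (Fin n → ℝ) → ℝ) (x : Fin n → ℝ) : ℝ :=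
  fderiv ℝ f x (Pi.single μ 1)

variable {n : ℕ}

/-- the integrand of ω -/
noncomputable def Fint (R : (Fin n → ℝ) → Fin n → Fin n → Matrix (Fin n) (Fin n) ℝ)
    (σ a b : Fin n) (x : Fin n → ℝ) (t : ℝ) : ℝ :=
  t * ∑ τ, x τ * R (t • x) τ σ a b

/-- derivative in x of the integrand of ω -/
noncomputable def Fder (R : (Fin n → ℝ) → Fin n → Fin n → Matrix (Fin n) (Fin n) ℝ)
    (σ a b : Fin n) (x : Fin n → ℝ) (t : ℝ) : (Fin n → ℝ) →L[ℝ] ℝ :=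
  t • ∑ τ, (x τ • ((fderiv ℝ (fun y => R y τ σ a b) (t • x)).comp
        (t • ContinuousLinearMap.id ℝ (Fin n → ℝ)))
      + R (t • x) τ σ a b • ContinuousLinearMap.proj τ)

lemma Fder_hasFDerivAt (R : (Fin n → ℝ) → Fin n → Fin n → Matrix (Fin n) (Fin n) ℝ)
    (hRsmooth : ∀ μ ν a b, ContDiff ℝ (⊤ : ℕ∞) fun x => R x μ ν a b)
    (σ a b : Fin n) (t : ℝ) (x : Fin n → ℝ) :
    HasFDerivAt (fun x => Fint R σ a b x t) (Fder R σ a b x t) x := by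
  apply HasFDerivAt.const_mul
  apply HasFDerivAt.fun_sum
  intro τ _
  have hc : HasFDerivAt (fun x : Fin n → ℝ => x τ)
      (ContinuousLinearMap.proj (R := ℝ) (φ := fun _ : Fin n => ℝ) τ) x := by
    exact (ContinuousLinearMap.proj (R := ℝ) (φ := fun _ : Fin n => ℝ) τ).hasFDerivAt (x := x)
  have hsmul : HasFDerivAt (fun x : Fin n → ℝ => t • x)
      (t • ContinuousLinearMap.id ℝ (Fin n → ℝ)) x := by
    simpa using HasFDerivAt.const_smul (𝕜 := ℝ) (R := ℝ) (hasFDerivAt_id x) t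
  have hd : HasFDerivAt (fun x : Fin n → ℝ => R (t • x) τ σ a b)
      ((fderiv ℝ (fun y => R y τ σ a b) (t • x)).comp
        (t • ContinuousLinearMap.id ℝ (Fin n → ℝ))) x :=
    (((hRsmooth τ σ a b).differentiable (by simp) (t • x)).hasFDerivAt).comp x hsmul
  exact hc.mul hd

lemma Fint_cont (R : (Fin n → ℝ) → Fin n → Fin n → Matrix (Fin n) (Fin n) ℝ)
    (hRsmooth : ∀ μ ν a b, ContDiff ℝ (⊤ : ℕ∞) fun x => R x μ ν a b)
    (σ a b : Fin n) (x : Fin n → ℝ) : Continuous fun t => Fint R σ a b x t := by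
  unfold Fint
  exact continuous_id.mul (continuous_finset_sum _ fun τ _ => continuous_const.mul
    ((hRsmooth τ σ a b).continuous.comp (continuous_id.smul continuous_const)))

lemma Fder_cont (R : (Fin n → ℝ) → Fin n → Fin n → Matrix (Fin n) (Fin n) ℝ)
    (hRsmooth : ∀ μ ν a b, ContDiff ℝ (⊤ : ℕ∞) fun x => R x μ ν a b)
    (σ a b : Fin n) (x : Fin n → ℝ) : Continuous fun t => Fder R σ a b x t := by
  unfold Fder
  refine continuous_id.smul (continuous_finset_sum _ fun τ _ => Continuous.add ?_ ?_)
  · exact Continuous.const_smul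
      ((((hRsmooth τ σ a b).continuous_fderiv (by simp)).comp
        (continuous_id.smul continuous_const)).clm_comp
        (continuous_id.smul continuous_const)) (x τ)
  · exact (((hRsmooth τ σ a b).continuous.comp
      (continuous_id.smul continuous_const))).smul continuous_const

lemma norm_proj_le (τ : Fin n) :
    ‖(ContinuousLinearMap.proj (R := ℝ) (φ := fun _ : Fin n => ℝ) τ)‖ ≤ 1 :=
  ContinuousLinearMap.opNorm_le_bound _ zero_le_one fun y => by
    simpa using norm_le_pi_norm y τ

lemma Fder_bound (R : (Fin n → ℝ) → Fin n → Fin n → Matrix (Fin n) (Fin n) ℝ)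
    (hRsmooth : ∀ μ ν a b, ContDiff ℝ (⊤ : ℕ∞) fun x => R x μ ν a b)
    (σ a b : Fin n) (x₀ : Fin n → ℝ) :
    ∃ C : ℝ, ∀ t ∈ Set.uIoc (0:ℝ) 1, ∀ x ∈ ball x₀ 1, ‖Fder R σ a b x t‖ ≤ C := by
  obtain ⟨C, hC⟩ := (isCompact_closedBall (0 : Fin n → ℝ) (‖x₀‖ + 1)).exists_bound_of_continuousOn
    (Continuous.continuousOn (f := fun y => ∑ τ : Fin n,
        (‖fderiv ℝ (fun z => R z τ σ a b) y‖ + ‖R y τ σ a b‖))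
      (continuous_finset_sum _ fun τ _ =>
        (((hRsmooth τ σ a b).continuous_fderiv (by simp)).norm).add
          ((hRsmooth τ σ a b).continuous.norm)))
  refine ⟨(‖x₀‖ + 2) * C, ?_⟩
  intro t ht x hx
  set B := ‖x₀‖ + 1 with hBdef
  have hB : 0 ≤ B := by positivity
  rw [Set.uIoc_of_le (by norm_num : (0:ℝ) ≤ 1)] at ht
  have ht' : |t| ≤ 1 := abs_le.mpr ⟨by linarith [ht.1], ht.2⟩
  have hxB : ‖x‖ ≤ B := by
    have h1 : ‖x‖ - ‖x₀‖ ≤ ‖x - x₀‖ := norm_sub_norm_le x x₀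
    have h2 : ‖x - x₀‖ < 1 := mem_ball_iff_norm.mp hx
    simp only [hBdef]; linarith
  have hmem : t • x ∈ closedBall (0 : Fin n → ℝ) B := by
    rw [mem_closedBall_zero_iff, norm_smul, Real.norm_eq_abs]
    nlinarith [norm_nonneg x, abs_nonneg t]
  have hsum := hC _ hmem
  have hsum' : ∑ τ : Fin n, (‖fderiv ℝ (fun z => R z τ σ a b) (t • x)‖ + ‖R (t • x) τ σ a b‖) ≤ C :=
    le_trans (le_abs_self _) (by simpa [Real.norm_eq_abs] using hsum)
  have hterm : ∀ τ : Fin n,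
      ‖x τ • ((fderiv ℝ (fun y => R y τ σ a b) (t • x)).comp
          (t • ContinuousLinearMap.id ℝ (Fin n → ℝ)))
        + R (t • x) τ σ a b • ContinuousLinearMap.proj τ‖
        ≤ (B + 1) * (‖fderiv ℝ (fun z => R z τ σ a b) (t • x)‖ + ‖R (t • x) τ σ a b‖) := by
    intro τ
    have hxτ : ‖x τ‖ ≤ B := le_trans (norm_le_pi_norm x τ) hxB
    have hcomp : ‖(fderiv ℝ (fun y => R y τ σ a b) (t • x)).comp
        (t • ContinuousLinearMap.id ℝ (Fin n → ℝ))‖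
        ≤ ‖fderiv ℝ (fun z => R z τ σ a b) (t • x)‖ := by
      refine le_trans (ContinuousLinearMap.opNorm_comp_le _ _) ?_
      have hid : ‖t • ContinuousLinearMap.id ℝ (Fin n → ℝ)‖ ≤ 1 := by
        refine le_trans (ContinuousLinearMap.opNorm_smul_le t _) ?_
        rw [Real.norm_eq_abs]
        nlinarith [ContinuousLinearMap.norm_id_le (𝕜 := ℝ) (E := Fin n → ℝ), abs_nonneg t,
          norm_nonneg (ContinuousLinearMap.id ℝ (Fin n → ℝ))]
      nlinarith [norm_nonneg (fderiv ℝ (fun z => R z τ σ a b) (t • x))]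
    refine le_trans (norm_add_le _ _) ?_
    have h2 : ‖x τ • ((fderiv ℝ (fun y => R y τ σ a b) (t • x)).comp
        (t • ContinuousLinearMap.id ℝ (Fin n → ℝ)))‖
        ≤ ‖x τ‖ * ‖(fderiv ℝ (fun y => R y τ σ a b) (t • x)).comp
          (t • ContinuousLinearMap.id ℝ (Fin n → ℝ))‖ := ContinuousLinearMap.opNorm_smul_le _ _
    have h3 : ‖R (t • x) τ σ a b • (ContinuousLinearMap.proj (R := ℝ) (φ := fun _ : Fin n => ℝ) τ)‖
        ≤ ‖R (t • x) τ σ a b‖ * ‖(ContinuousLinearMap.proj (R := ℝ) (φ := fun _ : Fin n => ℝ) τ)‖ :=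
      ContinuousLinearMap.opNorm_smul_le _ _

    have hproj := norm_proj_le (n := n) τ
    nlinarith [norm_nonneg (fderiv ℝ (fun z => R z τ σ a b) (t • x)),
      norm_nonneg (R (t • x) τ σ a b),
      norm_nonneg ((fderiv ℝ (fun y => R y τ σ a b) (t • x)).comp
        (t • ContinuousLinearMap.id ℝ (Fin n → ℝ))),
      norm_nonneg (ContinuousLinearMap.proj (R := ℝ) (φ := fun _ : Fin n => ℝ) τ),
      norm_nonneg (x τ), hcomp, h2, h3]
  calc ‖Fder R σ a b x t‖ ≤ 1 * ‖∑ τ : Fin n,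
        (x τ • ((fderiv ℝ (fun y => R y τ σ a b) (t • x)).comp
          (t • ContinuousLinearMap.id ℝ (Fin n → ℝ)))
        + R (t • x) τ σ a b • ContinuousLinearMap.proj τ)‖ := by
        rw [Fder]
        refine le_trans (ContinuousLinearMap.opNorm_smul_le t _) ?_
        rw [Real.norm_eq_abs]
        apply mul_le_mul_of_nonneg_right ht' (norm_nonneg _)
    _ ≤ ∑ τ : Fin n, (B + 1) * (‖fderiv ℝ (fun z => R z τ σ a b) (t • x)‖
          + ‖R (t • x) τ σ a b‖) := by
        rw [one_mul]
        exact le_trans (norm_sum_le _ _) (Finset.sum_le_sum fun τ _ => hterm τ)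
    _ = (B + 1) * ∑ τ : Fin n, (‖fderiv ℝ (fun z => R z τ σ a b) (t • x)‖
          + ‖R (t • x) τ σ a b‖) := by rw [Finset.mul_sum]
    _ ≤ (‖x₀‖ + 2) * C := by
        have hB1 : (0:ℝ) ≤ ‖x₀‖ + 2 := by positivity
        have h6 : B + 1 = ‖x₀‖ + 2 := by rw [hBdef]; ring
        rw [h6]
        exact mul_le_mul_of_nonneg_left hsum' hB1

lemma omega_pd (R : (Fin n → ℝ) → Fin n → Fin n → Matrix (Fin n) (Fin n) ℝ)
    (hRsmooth : ∀ μ ν a b, ContDiff ℝ (⊤ : ℕ∞) fun x => R x μ ν a b)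
    (ω : (Fin n → ℝ) → Fin n → Matrix (Fin n) (Fin n) ℝ)
    (hω : ∀ (x : Fin n → ℝ) μ a b,
      ω x μ a b = ∫ t in (0:ℝ)..1, t • ∑ ν, x ν * R (t • x) ν μ a b)
    (x₀ : Fin n → ℝ) (σ a b ρ : Fin n) :
    pd ρ (fun y => ω y σ a b) x₀
      = ∫ t in (0:ℝ)..1, (t * R (t • x₀) ρ σ a b
          + t^2 * ∑ τ, x₀ τ * pd ρ (fun y => R y τ σ a b) (t • x₀)) := by
  obtain ⟨C, hC⟩ := Fder_bound R hRsmooth σ a b x₀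
  have key := intervalIntegral.hasFDerivAt_integral_of_dominated_of_fderiv_le
    (𝕜 := ℝ) (μ := volume) (F := fun x t => Fint R σ a b x t)
    (F' := fun x t => Fder R σ a b x t) (x₀ := x₀)
    (a := 0) (b := 1) (bound := fun _ => C) (s := ball x₀ 1) (ball_mem_nhds x₀ one_pos)
    (Filter.Eventually.of_forall fun x => (Fint_cont R hRsmooth σ a b x).aestronglyMeasurable)
    ((Fint_cont R hRsmooth σ a b x₀).intervalIntegrable 0 1)
    (Fder_cont R hRsmooth σ a b x₀).aestronglyMeasurable
    (MeasureTheory.ae_of_all _ fun t ht x hx => hC t ht x hx)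
    intervalIntegrable_const
    (MeasureTheory.ae_of_all _ fun t _ x _ => Fder_hasFDerivAt R hRsmooth σ a b t x)
  have hωF : (fun y => ω y σ a b) = fun x => ∫ t in (0:ℝ)..1, Fint R σ a b x t := by
    funext y; rw [hω]; simp only [Fint, smul_eq_mul]
  rw [pd, hωF, key.fderiv,
    ContinuousLinearMap.intervalIntegral_apply ((Fder_cont R hRsmooth σ a b x₀).intervalIntegrable 0 1)]
  refine intervalIntegral.integral_congr fun t _ => ?_
  show Fder R σ a b x₀ t (Pi.single ρ 1) = _
  rw [Fder]
  rw [ContinuousLinearMap.smul_apply, ContinuousLinearMap.sum_apply]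
  simp only [ContinuousLinearMap.add_apply, ContinuousLinearMap.smul_apply,
    ContinuousLinearMap.comp_apply, ContinuousLinearMap.id_apply,
    ContinuousLinearMap.proj_apply, smul_eq_mul]
  have h1 : ∀ τ : Fin n, (fderiv ℝ (fun y => R y τ σ a b) (t • x₀))
      (t • (Pi.single ρ 1 : Fin n → ℝ)) = t * pd ρ (fun y => R y τ σ a b) (t • x₀) := by
    intro τ
    rw [ContinuousLinearMap.map_smul, smul_eq_mul, pd]
  have h2 : ∑ τ : Fin n, R (t • x₀) τ σ a b * (Pi.single ρ (1:ℝ) : Fin n → ℝ) τ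
      = R (t • x₀) ρ σ a b := by
    rw [Finset.sum_eq_single ρ]
    · simp
    · intro τ _ hτ; simp [Pi.single_apply, hτ]
    · intro h; exact absurd (Finset.mem_univ ρ) h
  simp only [h1]
  rw [Finset.sum_add_distrib, h2]
  have h3 : ∑ τ : Fin n, x₀ τ * (t * pd ρ (fun y => R y τ σ a b) (t • x₀))
      = t * ∑ τ : Fin n, x₀ τ * pd ρ (fun y => R y τ σ a b) (t • x₀) := by
    rw [Finset.mul_sum]; exact Finset.sum_congr rfl fun τ _ => by ring
  rw [h3]
  ring

lemma pd_neg {n : ℕ} (μ : Fin n) (f : (Fin n → ℝ) → ℝ) (z : Fin n → ℝ) :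
    pd μ (fun y => -f y) z = - pd μ f z := by
  rw [pd, pd, fderiv_fun_neg]; simp

lemma omega_scale (R : (Fin n → ℝ) → Fin n → Fin n → Matrix (Fin n) (Fin n) ℝ)
    (ω : (Fin n → ℝ) → Fin n → Matrix (Fin n) (Fin n) ℝ)
    (hω : ∀ (x : Fin n → ℝ) μ a b,
      ω x μ a b = ∫ t in (0:ℝ)..1, t • ∑ ν, x ν * R (t • x) ν μ a b)
    (x : Fin n → ℝ) (σ a b : Fin n) (t : ℝ) :
    t * ω (t • x) σ a b = ∫ u in (0:ℝ)..t, Fint R σ a b x u := by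
  rw [hω (t • x) σ a b]
  have h1 : ∀ s : ℝ, (s • ∑ τ, (t • x) τ * R (s • t • x) τ σ a b)
      = Fint R σ a b x (t * s) := by
    intro s
    rw [Fint]
    simp only [Pi.smul_apply, smul_eq_mul, smul_smul]
    rw [mul_comm s t]
    have h2 : ∑ τ, (t * x τ) * R ((t * s) • x) τ σ a b
        = t * ∑ τ, x τ * R ((t * s) • x) τ σ a b := by
      rw [Finset.mul_sum]; exact Finset.sum_congr rfl fun τ _ => by ring
    rw [h2]; ring
  rw [intervalIntegral.integral_congr (g := fun s => Fint R σ a b x (t * s))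
    (fun s _ => h1 s), ← smul_eq_mul,
    intervalIntegral.smul_integral_comp_mul_left (fun u => Fint R σ a b x u) t]
  norm_num

lemma pointwise_key (R : (Fin n → ℝ) → Fin n → Fin n → Matrix (Fin n) (Fin n) ℝ)
    (hRsmooth : ∀ μ ν a b, ContDiff ℝ (⊤ : ℕ∞) fun x => R x μ ν a b)
    (hanti : ∀ (x : Fin n → ℝ) μ ν a b, R x μ ν a b = - R x ν μ a b)
    (ω : (Fin n → ℝ) → Fin n → Matrix (Fin n) (Fin n) ℝ)
    (hω : ∀ (x : Fin n → ℝ) μ a b,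
      ω x μ a b = ∫ t in (0:ℝ)..1, t • ∑ ν, x ν * R (t • x) ν μ a b)
    (hbianchi2 : ∀ (x : Fin n → ℝ) μ ν ρ a b,
      pd μ (fun y => R y ν ρ a b) x + pd ν (fun y => R y ρ μ a b) x
        + pd ρ (fun y => R y μ ν a b) x
        + ∑ c, (ω x μ a c * R x ν ρ c b - R x ν ρ a c * ω x μ c b
          + ω x ν a c * R x ρ μ c b - R x ρ μ a c * ω x ν c b
          + ω x ρ a c * R x μ ν c b - R x μ ν a c * ω x ρ c b) = 0)
    (x : Fin n → ℝ) (μ ν a b : Fin n) (t : ℝ) :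
    (t * R (t • x) μ ν a b + t^2 * ∑ τ, x τ * pd μ (fun y => R y τ ν a b) (t • x))
      - (t * R (t • x) ν μ a b + t^2 * ∑ τ, x τ * pd ν (fun y => R y τ μ a b) (t • x))
    = 2 * t * R (t • x) μ ν a b
        + t^2 * ((fderiv ℝ (fun y => R y μ ν a b) (t • x)) x)
        + ∑ c, ((Fint R ν a c x t) * (∫ u in (0:ℝ)..t, Fint R μ c b x u)
            + (∫ u in (0:ℝ)..t, Fint R ν a c x u) * (Fint R μ c b x t)
            - ((Fint R μ a c x t) * (∫ u in (0:ℝ)..t, Fint R ν c b x u)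
            + (∫ u in (0:ℝ)..t, Fint R μ a c x u) * (Fint R ν c b x t))) := by
  have hminus : ∀ (ρ τ σ' i j : Fin n) (z : Fin n → ℝ),
      pd ρ (fun y => R y τ σ' i j) z = - pd ρ (fun y => R y σ' τ i j) z := by
    intro ρ τ σ' i j z
    rw [show (fun y => R y τ σ' i j) = fun y => -(R y σ' τ i j) from
      funext fun w => hanti w τ σ' i j, pd_neg]
  have fact2 : ∀ τ, pd μ (fun y => R y τ ν a b) (t • x) - pd ν (fun y => R y τ μ a b) (t • x)
      = pd τ (fun y => R y μ ν a b) (t • x)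
        + ∑ c, (ω (t • x) μ a c * R (t • x) ν τ c b - R (t • x) ν τ a c * ω (t • x) μ c b
          + ω (t • x) ν a c * R (t • x) τ μ c b - R (t • x) τ μ a c * ω (t • x) ν c b
          + ω (t • x) τ a c * R (t • x) μ ν c b - R (t • x) μ ν a c * ω (t • x) τ c b) := by
    intro τ
    have hb := hbianchi2 (t • x) μ ν τ a b
    have h1 := hminus μ τ ν a b (t • x)
    linarith [hb, h1]
  -- the commutator sum computation
  have perc : ∀ c : Fin n,
      t^2 * ∑ τ, x τ *
        (ω (t • x) μ a c * R (t • x) ν τ c b - R (t • x) ν τ a c * ω (t • x) μ c b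
          + ω (t • x) ν a c * R (t • x) τ μ c b - R (t • x) τ μ a c * ω (t • x) ν c b
          + ω (t • x) τ a c * R (t • x) μ ν c b - R (t • x) μ ν a c * ω (t • x) τ c b)
      = (Fint R ν a c x t) * (∫ u in (0:ℝ)..t, Fint R μ c b x u)
          + (∫ u in (0:ℝ)..t, Fint R ν a c x u) * (Fint R μ c b x t)
          - ((Fint R μ a c x t) * (∫ u in (0:ℝ)..t, Fint R ν c b x u)
          + (∫ u in (0:ℝ)..t, Fint R μ a c x u) * (Fint R ν c b x t)) := by
    intro c
    have expand : ∑ τ, x τ *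
        (ω (t • x) μ a c * R (t • x) ν τ c b - R (t • x) ν τ a c * ω (t • x) μ c b
          + ω (t • x) ν a c * R (t • x) τ μ c b - R (t • x) τ μ a c * ω (t • x) ν c b
          + ω (t • x) τ a c * R (t • x) μ ν c b - R (t • x) μ ν a c * ω (t • x) τ c b)
        = ω (t • x) μ a c * (∑ τ, x τ * R (t • x) ν τ c b)
          - (∑ τ, x τ * R (t • x) ν τ a c) * ω (t • x) μ c b
          + ω (t • x) ν a c * (∑ τ, x τ * R (t • x) τ μ c b)
          - (∑ τ, x τ * R (t • x) τ μ a c) * ω (t • x) ν c b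
          + (∑ τ, x τ * ω (t • x) τ a c) * R (t • x) μ ν c b
          - R (t • x) μ ν a c * (∑ τ, x τ * ω (t • x) τ c b) := by
      rw [Finset.mul_sum, Finset.sum_mul, Finset.mul_sum, Finset.sum_mul, Finset.sum_mul,
        Finset.mul_sum, ← Finset.sum_sub_distrib, ← Finset.sum_add_distrib,
        ← Finset.sum_sub_distrib, ← Finset.sum_add_distrib, ← Finset.sum_sub_distrib]
      exact Finset.sum_congr rfl fun τ _ => by ring
    have hA : t * ω (t • x) μ a c = ∫ u in (0:ℝ)..t, Fint R μ a c x u :=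
      omega_scale R ω hω x μ a c t
    have hB : t * ω (t • x) μ c b = ∫ u in (0:ℝ)..t, Fint R μ c b x u :=
      omega_scale R ω hω x μ c b t
    have hCf : t * ω (t • x) ν a c = ∫ u in (0:ℝ)..t, Fint R ν a c x u :=
      omega_scale R ω hω x ν a c t
    have hD : t * ω (t • x) ν c b = ∫ u in (0:ℝ)..t, Fint R ν c b x u :=
      omega_scale R ω hω x ν c b t
    have h1 : t * (∑ τ, x τ * R (t • x) ν τ c b) = - Fint R ν c b x t := by
      rw [Fint, Finset.sum_congr rfl fun τ _ =>
        (by rw [hanti (t • x) ν τ c b]; ring :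
          x τ * R (t • x) ν τ c b = -(x τ * R (t • x) τ ν c b)),
        Finset.sum_neg_distrib]
      ring
    have h2 : t * (∑ τ, x τ * R (t • x) ν τ a c) = - Fint R ν a c x t := by
      rw [Fint, Finset.sum_congr rfl fun τ _ =>
        (by rw [hanti (t • x) ν τ a c]; ring :
          x τ * R (t • x) ν τ a c = -(x τ * R (t • x) τ ν a c)),
        Finset.sum_neg_distrib]
      ring
    have h3 : t * (∑ τ, x τ * R (t • x) τ μ c b) = Fint R μ c b x t := by rw [Fint]
    have h4 : t * (∑ τ, x τ * R (t • x) τ μ a c) = Fint R μ a c x t := by rw [Fint]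
    have hω0 : ∀ i j : Fin n, t * (∑ τ, x τ * ω (t • x) τ i j) = 0 := by
      intro i j
      have hg := gauge_lemma R hRsmooth hanti ω hω (t • x) i j
      calc t * (∑ τ, x τ * ω (t • x) τ i j) = ∑ τ, (t • x) τ * ω (t • x) τ i j := by
            rw [Finset.mul_sum]
            exact Finset.sum_congr rfl fun τ _ => by
              simp only [Pi.smul_apply, smul_eq_mul]; ring
        _ = 0 := hg
    have p1 : t^2 * (ω (t • x) μ a c * (∑ τ, x τ * R (t • x) ν τ c b))
        = (∫ u in (0:ℝ)..t, Fint R μ a c x u) * (- Fint R ν c b x t) := by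
      calc t^2 * (ω (t • x) μ a c * (∑ τ, x τ * R (t • x) ν τ c b))
          = (t * ω (t • x) μ a c) * (t * (∑ τ, x τ * R (t • x) ν τ c b)) := by ring
        _ = _ := by rw [hA, h1]
    have p2 : t^2 * ((∑ τ, x τ * R (t • x) ν τ a c) * ω (t • x) μ c b)
        = (- Fint R ν a c x t) * (∫ u in (0:ℝ)..t, Fint R μ c b x u) := by
      calc t^2 * ((∑ τ, x τ * R (t • x) ν τ a c) * ω (t • x) μ c b)
          = (t * (∑ τ, x τ * R (t • x) ν τ a c)) * (t * ω (t • x) μ c b) := by ring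
        _ = _ := by rw [hB, h2]
    have p3 : t^2 * (ω (t • x) ν a c * (∑ τ, x τ * R (t • x) τ μ c b))
        = (∫ u in (0:ℝ)..t, Fint R ν a c x u) * (Fint R μ c b x t) := by
      calc t^2 * (ω (t • x) ν a c * (∑ τ, x τ * R (t • x) τ μ c b))
          = (t * ω (t • x) ν a c) * (t * (∑ τ, x τ * R (t • x) τ μ c b)) := by ring
        _ = _ := by rw [hCf, h3]
    have p4 : t^2 * ((∑ τ, x τ * R (t • x) τ μ a c) * ω (t • x) ν c b)
        = (Fint R μ a c x t) * (∫ u in (0:ℝ)..t, Fint R ν c b x u) := by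
      calc t^2 * ((∑ τ, x τ * R (t • x) τ μ a c) * ω (t • x) ν c b)
          = (t * (∑ τ, x τ * R (t • x) τ μ a c)) * (t * ω (t • x) ν c b) := by ring
        _ = _ := by rw [hD, h4]
    have p5 : t^2 * ((∑ τ, x τ * ω (t • x) τ a c) * R (t • x) μ ν c b) = 0 := by
      calc t^2 * ((∑ τ, x τ * ω (t • x) τ a c) * R (t • x) μ ν c b)
          = (t * (∑ τ, x τ * ω (t • x) τ a c)) * (t * R (t • x) μ ν c b) := by ring
        _ = 0 := by rw [hω0 a c]; ring
    have p6 : t^2 * (R (t • x) μ ν a c * (∑ τ, x τ * ω (t • x) τ c b)) = 0 := by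
      calc t^2 * (R (t • x) μ ν a c * (∑ τ, x τ * ω (t • x) τ c b))
          = (t * R (t • x) μ ν a c) * (t * (∑ τ, x τ * ω (t • x) τ c b)) := by ring
        _ = 0 := by rw [hω0 c b]; ring
    rw [expand]
    linear_combination p1 - p2 + p3 - p4 + p5 - p6
  -- assemble the t² sum part
  have key2 : t^2 * (∑ τ, x τ * pd μ (fun y => R y τ ν a b) (t • x))
      - t^2 * (∑ τ, x τ * pd ν (fun y => R y τ μ a b) (t • x))
      = t^2 * ((fderiv ℝ (fun y => R y μ ν a b) (t • x)) x)
        + ∑ c, ((Fint R ν a c x t) * (∫ u in (0:ℝ)..t, Fint R μ c b x u)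
            + (∫ u in (0:ℝ)..t, Fint R ν a c x u) * (Fint R μ c b x t)
            - ((Fint R μ a c x t) * (∫ u in (0:ℝ)..t, Fint R ν c b x u)
            + (∫ u in (0:ℝ)..t, Fint R μ a c x u) * (Fint R ν c b x t))) := by
    have s1 : t^2 * (∑ τ, x τ * pd μ (fun y => R y τ ν a b) (t • x))
        - t^2 * (∑ τ, x τ * pd ν (fun y => R y τ μ a b) (t • x))
        = t^2 * ∑ τ, x τ * (pd μ (fun y => R y τ ν a b) (t • x)
            - pd ν (fun y => R y τ μ a b) (t • x)) := by
      rw [← mul_sub, ← Finset.sum_sub_distrib]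
      congr 1
      exact Finset.sum_congr rfl fun τ _ => by ring
    rw [s1, Finset.sum_congr rfl fun τ _ => by rw [fact2 τ]]
    have s2 : ∑ τ, x τ * (pd τ (fun y => R y μ ν a b) (t • x)
        + ∑ c, (ω (t • x) μ a c * R (t • x) ν τ c b - R (t • x) ν τ a c * ω (t • x) μ c b
          + ω (t • x) ν a c * R (t • x) τ μ c b - R (t • x) τ μ a c * ω (t • x) ν c b
          + ω (t • x) τ a c * R (t • x) μ ν c b - R (t • x) μ ν a c * ω (t • x) τ c b))
        = (∑ τ, x τ * pd τ (fun y => R y μ ν a b) (t • x))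
          + ∑ c, ∑ τ, x τ *
            (ω (t • x) μ a c * R (t • x) ν τ c b - R (t • x) ν τ a c * ω (t • x) μ c b
            + ω (t • x) ν a c * R (t • x) τ μ c b - R (t • x) τ μ a c * ω (t • x) ν c b
            + ω (t • x) τ a c * R (t • x) μ ν c b - R (t • x) μ ν a c * ω (t • x) τ c b) := by
      rw [Finset.sum_congr rfl fun τ _ => (by rw [mul_add, Finset.mul_sum] :
        x τ * (pd τ (fun y => R y μ ν a b) (t • x) + ∑ c,
          (ω (t • x) μ a c * R (t • x) ν τ c b - R (t • x) ν τ a c * ω (t • x) μ c b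
          + ω (t • x) ν a c * R (t • x) τ μ c b - R (t • x) τ μ a c * ω (t • x) ν c b
          + ω (t • x) τ a c * R (t • x) μ ν c b - R (t • x) μ ν a c * ω (t • x) τ c b))
        = x τ * pd τ (fun y => R y μ ν a b) (t • x) + ∑ c, x τ *
          (ω (t • x) μ a c * R (t • x) ν τ c b - R (t • x) ν τ a c * ω (t • x) μ c b
          + ω (t • x) ν a c * R (t • x) τ μ c b - R (t • x) τ μ a c * ω (t • x) ν c b
          + ω (t • x) τ a c * R (t • x) μ ν c b - R (t • x) μ ν a c * ω (t • x) τ c b)),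
        Finset.sum_add_distrib, Finset.sum_comm]
    rw [s2]
    have s3 : ∑ τ, x τ * pd τ (fun y => R y μ ν a b) (t • x)
        = (fderiv ℝ (fun y => R y μ ν a b) (t • x)) x := by
      rw [clm_eval_sum (fderiv ℝ (fun y => R y μ ν a b) (t • x)) x]
      exact Finset.sum_congr rfl fun τ _ => by rw [pd]
    rw [mul_add, s3, Finset.mul_sum,
      Finset.sum_congr rfl fun c _ => perc c]
  have hnm : R (t • x) ν μ a b = - R (t • x) μ ν a b := hanti (t • x) ν μ a b
  linear_combination key2 - t * hnm

/-- if a smooth `R` on `ℝⁿ`, antisymmetric in the form indices and in the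
matrix indices, satisfies the 2nd Bianchi identity for curvature (with
`ω^a_{bμ}(x) := ∫₀¹ t ∑_ν x^ν R^a_{bνμ}(tx) dt`), then `R` is the curvature of `ω`,
each matrix `ω_μ(x)` is antisymmetric, and `ω` is in the Fock–Schwinger gauge.
Here `ω x μ a b = ω^a_{bμ}(x)` and `R x μ ν a b = R^a_{bμν}(x)`. -/
theorem second_bianchi_implies_curvature_of_radial_spin_connection
    {n : ℕ} (hn : 1 ≤ n)
    (R : (Fin n → ℝ) → Fin n → Fin n → Matrix (Fin n) (Fin n) ℝ)
    (hRsmooth : ∀ μ ν a b, ContDiff ℝ (⊤ : ℕ∞) fun x => R x μ ν a b)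
    (hanti : ∀ (x : Fin n → ℝ) μ ν a b, R x μ ν a b = - R x ν μ a b)
    (hantiM : ∀ (x : Fin n → ℝ) μ ν a b, R x μ ν a b = - R x μ ν b a)
    (ω : (Fin n → ℝ) → Fin n → Matrix (Fin n) (Fin n) ℝ)
    (hω : ∀ (x : Fin n → ℝ) μ a b,
      ω x μ a b = ∫ t in (0:ℝ)..1, t • ∑ ν, x ν * R (t • x) ν μ a b)
    (hbianchi2 : ∀ (x : Fin n → ℝ) μ ν ρ a b,
      pd μ (fun y => R y ν ρ a b) x + pd ν (fun y => R y ρ μ a b) x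
        + pd ρ (fun y => R y μ ν a b) x
        + ∑ c, (ω x μ a c * R x ν ρ c b - R x ν ρ a c * ω x μ c b
          + ω x ν a c * R x ρ μ c b - R x ρ μ a c * ω x ν c b
          + ω x ρ a c * R x μ ν c b - R x μ ν a c * ω x ρ c b) = 0) :
    (∀ (x : Fin n → ℝ) μ ν a b, R x μ ν a b =
      pd μ (fun y => ω y ν a b) x - pd ν (fun y => ω y μ a b) x
        + ∑ c, (ω x μ a c * ω x ν c b - ω x ν a c * ω x μ c b))
    ∧ (∀ (x : Fin n → ℝ) μ a b, ω x μ a b = - ω x μ b a)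
    ∧ (∀ (x : Fin n → ℝ) a b, ∑ μ, x μ * ω x μ a b = 0) := by
  refine ⟨?_, ?_, gauge_lemma R hRsmooth hanti ω hω⟩
  · intro x μ ν a b
    have hfc : ∀ (σ i j : Fin n), Continuous fun t => Fint R σ i j x t :=
      fun σ i j => Fint_cont R hRsmooth σ i j x
    have hg' : ∀ (σ i j : Fin n) (t : ℝ),
        HasDerivAt (fun s => ∫ u in (0:ℝ)..s, Fint R σ i j x u) (Fint R σ i j x t) t := by
      intro σ i j t
      exact intervalIntegral.integral_hasDerivAt_right
        ((hfc σ i j).intervalIntegrable 0 t)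
        (hfc σ i j).aestronglyMeasurable.stronglyMeasurableAtFilter
        (hfc σ i j).continuousAt
    have hgc : ∀ (σ i j : Fin n), Continuous fun t : ℝ => ∫ u in (0:ℝ)..t, Fint R σ i j x u :=
      fun σ i j => continuous_iff_continuousAt.mpr fun t => (hg' σ i j t).continuousAt
    have hpdc : ∀ (ρ τ σ : Fin n), Continuous fun t : ℝ => pd ρ (fun y => R y τ σ a b) (t • x) := by
      intro ρ τ σ
      have h1 : Continuous fun y : Fin n → ℝ => fderiv ℝ (fun z => R z τ σ a b) y :=
        (hRsmooth τ σ a b).continuous_fderiv (by simp)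
      have h2 := (h1.comp (continuous_id.smul
        (continuous_const : Continuous fun _ : ℝ => x))).clm_apply
        (continuous_const : Continuous fun _ : ℝ => (Pi.single ρ 1 : Fin n → ℝ))
      unfold pd
      exact h2
    have hI : ∀ (ρ σ : Fin n), Continuous fun t : ℝ =>
        t * R (t • x) ρ σ a b + t^2 * ∑ τ, x τ * pd ρ (fun y => R y τ σ a b) (t • x) := by
      intro ρ σ
      exact (continuous_id.mul (Rcont R hRsmooth x ρ σ a b)).add
        ((continuous_id.pow 2).mul (continuous_finset_sum _ fun τ _ =>
          continuous_const.mul (hpdc ρ τ σ)))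
    have hfdxc : Continuous fun t : ℝ => (fderiv ℝ (fun y => R y μ ν a b) (t • x)) x := by
      exact (((hRsmooth μ ν a b).continuous_fderiv (by simp)).comp
        (continuous_id.smul (continuous_const : Continuous fun _ : ℝ => x))).clm_apply
        continuous_const
    have hG0c : Continuous fun t : ℝ =>
        2 * t * R (t • x) μ ν a b + t^2 * ((fderiv ℝ (fun y => R y μ ν a b) (t • x)) x)
          + ∑ c, ((Fint R ν a c x t) * (∫ u in (0:ℝ)..t, Fint R μ c b x u)
            + (∫ u in (0:ℝ)..t, Fint R ν a c x u) * (Fint R μ c b x t)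
            - ((Fint R μ a c x t) * (∫ u in (0:ℝ)..t, Fint R ν c b x u)
            + (∫ u in (0:ℝ)..t, Fint R μ a c x u) * (Fint R ν c b x t))) := by
      refine (((continuous_const.mul continuous_id).mul
        (Rcont R hRsmooth x μ ν a b)).add ((continuous_id.pow 2).mul hfdxc)).add
        (continuous_finset_sum _ fun c _ => Continuous.sub
          (((hfc ν a c).mul (hgc μ c b)).add ((hgc ν a c).mul (hfc μ c b)))
          (((hfc μ a c).mul (hgc ν c b)).add ((hgc μ a c).mul (hfc ν c b))))
    have hH : ∀ t : ℝ, HasDerivAt (fun s : ℝ => s^2 * R (s • x) μ ν a b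
        + ∑ c, ((∫ u in (0:ℝ)..s, Fint R ν a c x u) * (∫ u in (0:ℝ)..s, Fint R μ c b x u)
          - (∫ u in (0:ℝ)..s, Fint R μ a c x u) * (∫ u in (0:ℝ)..s, Fint R ν c b x u)))
        (2 * t * R (t • x) μ ν a b + t^2 * ((fderiv ℝ (fun y => R y μ ν a b) (t • x)) x)
          + ∑ c, ((Fint R ν a c x t) * (∫ u in (0:ℝ)..t, Fint R μ c b x u)
            + (∫ u in (0:ℝ)..t, Fint R ν a c x u) * (Fint R μ c b x t)
            - ((Fint R μ a c x t) * (∫ u in (0:ℝ)..t, Fint R ν c b x u)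
            + (∫ u in (0:ℝ)..t, Fint R μ a c x u) * (Fint R ν c b x t)))) t := by
      intro t
      have hsm : HasDerivAt (fun s : ℝ => s • x) x t := by
        simpa using (hasDerivAt_id t).smul_const x
      have hRd : HasDerivAt (fun s : ℝ => R (s • x) μ ν a b)
          ((fderiv ℝ (fun y => R y μ ν a b) (t • x)) x) t :=
        by have := (((hRsmooth μ ν a b).differentiable (by simp) (t • x)).hasFDerivAt).comp_hasDerivAt t hsm; exact this
      have h1 : HasDerivAt (fun s : ℝ => s^2 * R (s • x) μ ν a b)
          (2 * t * R (t • x) μ ν a b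
            + t^2 * ((fderiv ℝ (fun y => R y μ ν a b) (t • x)) x)) t := by
        have := (hasDerivAt_pow 2 t).fun_mul hRd
        refine this.congr_deriv ?_
        push_cast
        ring
      have h2 : HasDerivAt (fun s : ℝ =>
          ∑ c, ((∫ u in (0:ℝ)..s, Fint R ν a c x u) * (∫ u in (0:ℝ)..s, Fint R μ c b x u)
          - (∫ u in (0:ℝ)..s, Fint R μ a c x u) * (∫ u in (0:ℝ)..s, Fint R ν c b x u)))
          (∑ c, ((Fint R ν a c x t) * (∫ u in (0:ℝ)..t, Fint R μ c b x u)
            + (∫ u in (0:ℝ)..t, Fint R ν a c x u) * (Fint R μ c b x t)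
            - ((Fint R μ a c x t) * (∫ u in (0:ℝ)..t, Fint R ν c b x u)
            + (∫ u in (0:ℝ)..t, Fint R μ a c x u) * (Fint R ν c b x t)))) t :=
        HasDerivAt.fun_sum fun c _ =>
          ((hg' ν a c t).mul (hg' μ c b t)).sub ((hg' μ a c t).mul (hg' ν c b t))
      exact h1.add h2
    have hDμ := omega_pd R hRsmooth ω hω x ν a b μ
    have hDν := omega_pd R hRsmooth ω hω x μ a b ν
    have hsub : pd μ (fun y => ω y ν a b) x - pd ν (fun y => ω y μ a b) x
        = ∫ t in (0:ℝ)..1,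
          ((t * R (t • x) μ ν a b + t^2 * ∑ τ, x τ * pd μ (fun y => R y τ ν a b) (t • x))
          - (t * R (t • x) ν μ a b + t^2 * ∑ τ, x τ * pd ν (fun y => R y τ μ a b) (t • x))) := by
      rw [hDμ, hDν, intervalIntegral.integral_sub ((hI μ ν).intervalIntegrable 0 1)
        ((hI ν μ).intervalIntegrable 0 1)]
    have hcongr : (∫ t in (0:ℝ)..1,
          ((t * R (t • x) μ ν a b + t^2 * ∑ τ, x τ * pd μ (fun y => R y τ ν a b) (t • x))
          - (t * R (t • x) ν μ a b + t^2 * ∑ τ, x τ * pd ν (fun y => R y τ μ a b) (t • x))))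
        = ∫ t in (0:ℝ)..1,
          (2 * t * R (t • x) μ ν a b + t^2 * ((fderiv ℝ (fun y => R y μ ν a b) (t • x)) x)
          + ∑ c, ((Fint R ν a c x t) * (∫ u in (0:ℝ)..t, Fint R μ c b x u)
            + (∫ u in (0:ℝ)..t, Fint R ν a c x u) * (Fint R μ c b x t)
            - ((Fint R μ a c x t) * (∫ u in (0:ℝ)..t, Fint R ν c b x u)
            + (∫ u in (0:ℝ)..t, Fint R μ a c x u) * (Fint R ν c b x t)))) :=
      intervalIntegral.integral_congr fun t _ =>
        pointwise_key R hRsmooth hanti ω hω hbianchi2 x μ ν a b t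
    have hftc : (∫ t in (0:ℝ)..1,
          (2 * t * R (t • x) μ ν a b + t^2 * ((fderiv ℝ (fun y => R y μ ν a b) (t • x)) x)
          + ∑ c, ((Fint R ν a c x t) * (∫ u in (0:ℝ)..t, Fint R μ c b x u)
            + (∫ u in (0:ℝ)..t, Fint R ν a c x u) * (Fint R μ c b x t)
            - ((Fint R μ a c x t) * (∫ u in (0:ℝ)..t, Fint R ν c b x u)
            + (∫ u in (0:ℝ)..t, Fint R μ a c x u) * (Fint R ν c b x t)))))
        = ((1:ℝ)^2 * R ((1:ℝ) • x) μ ν a b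
          + ∑ c, ((∫ u in (0:ℝ)..(1:ℝ), Fint R ν a c x u) * (∫ u in (0:ℝ)..(1:ℝ), Fint R μ c b x u)
          - (∫ u in (0:ℝ)..(1:ℝ), Fint R μ a c x u) * (∫ u in (0:ℝ)..(1:ℝ), Fint R ν c b x u)))
        - ((0:ℝ)^2 * R ((0:ℝ) • x) μ ν a b
          + ∑ c, ((∫ u in (0:ℝ)..(0:ℝ), Fint R ν a c x u) * (∫ u in (0:ℝ)..(0:ℝ), Fint R μ c b x u)
          - (∫ u in (0:ℝ)..(0:ℝ), Fint R μ a c x u) * (∫ u in (0:ℝ)..(0:ℝ), Fint R ν c b x u))) :=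
      intervalIntegral.integral_eq_sub_of_hasDerivAt (fun t _ => hH t)
        (hG0c.intervalIntegrable 0 1)
    have hgone : ∀ (σ i j : Fin n), (∫ u in (0:ℝ)..1, Fint R σ i j x u) = ω x σ i j := by
      intro σ i j
      have h := omega_scale R ω hω x σ i j 1
      rw [one_smul, one_mul] at h
      exact h.symm
    have final : pd μ (fun y => ω y ν a b) x - pd ν (fun y => ω y μ a b) x
        = R x μ ν a b + ∑ c, (ω x ν a c * ω x μ c b - ω x μ a c * ω x ν c b) := by
      rw [hsub, hcongr, hftc]
      simp only [hgone, intervalIntegral.integral_same, one_smul, one_pow, one_mul,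
        zero_smul, mul_zero, zero_mul, sub_zero, zero_sub, zero_pow]
      simp
    have hQ : ∑ c, (ω x ν a c * ω x μ c b - ω x μ a c * ω x ν c b)
        = - ∑ c, (ω x μ a c * ω x ν c b - ω x ν a c * ω x μ c b) := by
      rw [← Finset.sum_neg_distrib]
      exact Finset.sum_congr rfl fun c _ => by ring
    rw [final, hQ]
    ring
  · intro x μ a b
    rw [hω x μ a b, hω x μ b a, ← intervalIntegral.integral_neg]
    refine intervalIntegral.integral_congr fun t _ => ?_
    have h : ∀ ν' : Fin n, x ν' * R (t • x) ν' μ a b = -(x ν' * R (t • x) ν' μ b a) :=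
      fun ν' => by rw [hantiM (t • x) ν' μ a b]; ring
    simp only [smul_eq_mul]
    rw [Finset.sum_congr rfl fun ν' _ => h ν', Finset.sum_neg_distrib]
    ring
end

section
/- Let ω : ℝⁿ → (Fin n → Matrix (Fin n) (Fin n) ℝ) be a smooth map, written ω^a_{bμ}(x), satisfying the Fock–Schwinger gauge condition ∑_μ x^μ ω^a_{bμ}(x) = 0 for all x, and let e : ℝⁿ → Matrix (Fin n) (Fin n) ℝ be a smooth map, written e^a_μ(x), satisfying: (i) the torsion-free equation ∂_μ e^a_ν − ∂_ν e^a_μ + ∑_b (ω^a_{bμ} e^b_ν − ω^a_{bν} e^b_μ) = 0 for all x, a, μ, ν; and (ii) the normal-coordinates condition ∑_μ x^μ e^a_μ(x) = x^a for all x and a. Then for all x, a, μ: e^a_μ(x) = δ^a_μ + ∫₀¹ t ∑_b x^b ω^a_{bμ}(tx) dt. -/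
private lemma pi_single_sum {n : ℕ} (v : Fin n → ℝ) :
    ∑ ν, v ν • (Pi.single ν 1 : Fin n → ℝ) = v := by
  funext j
  simp [Finset.sum_apply, Pi.single_apply]

private lemma fderiv_eq_sum_pd {n : ℕ} (f : (Fin n → ℝ) → ℝ) (hf : Differentiable ℝ f)
    (y v : Fin n → ℝ) : fderiv ℝ f y v = ∑ ν, v ν * pd ν f y := by
  conv_lhs => rw [← pi_single_sum v]
  rw [map_sum]
  simp [pd, smul_eq_mul]

private lemma line_deriv {n : ℕ} (x : Fin n → ℝ) (t : ℝ) :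
    HasDerivAt (fun t : ℝ => t • x) x t := by
  simpa using (hasDerivAt_id t).smul_const x

private lemma comp_line {n : ℕ} (f : (Fin n → ℝ) → ℝ) (hf : Differentiable ℝ f)
    (x : Fin n → ℝ) (t : ℝ) :
    HasDerivAt (fun t : ℝ => f (t • x)) (∑ ν, x ν * pd ν f (t • x)) t := by
  have h := (hf (t • x)).hasFDerivAt.comp_hasDerivAt t (line_deriv x t)
  rwa [fderiv_eq_sum_pd f hf] at h

private lemma normal_pd {n : ℕ} (e : (Fin n → ℝ) → Matrix (Fin n) (Fin n) ℝ)
    (hesmooth : ∀ a μ, ContDiff ℝ (⊤ : ℕ∞) fun x => e x a μ)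
    (hnormal : ∀ (x : Fin n → ℝ) a, ∑ μ, x μ * e x a μ = x a)
    (y : Fin n → ℝ) (a μ : Fin n) :
    e y a μ + ∑ ν, y ν * pd μ (fun z => e z a ν) y
      = (1 : Matrix (Fin n) (Fin n) ℝ) a μ := by
  have H : HasFDerivAt (fun z : Fin n → ℝ => ∑ ν, z ν * e z a ν)
      (∑ ν, ((y ν) • fderiv ℝ (fun z => e z a ν) y
        + (e y a ν) • ContinuousLinearMap.proj ν)) y := by
    apply HasFDerivAt.fun_sum
    intro ν _
    exact (hasFDerivAt_apply ν y).mul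
      (((hesmooth a ν).differentiable (by simp) y).hasFDerivAt)
  have hfun : (fun z : Fin n → ℝ => ∑ ν, z ν * e z a ν) = fun z => z a :=
    funext fun z => hnormal z a
  rw [hfun] at H
  have H2 : HasFDerivAt (fun z : Fin n → ℝ => z a)
      (ContinuousLinearMap.proj a : (Fin n → ℝ) →L[ℝ] ℝ) y := hasFDerivAt_apply a y
  have hL := H.unique H2
  have := congrArg (fun L : (Fin n → ℝ) →L[ℝ] ℝ => L (Pi.single μ 1)) hL
  simp only [ContinuousLinearMap.sum_apply, ContinuousLinearMap.add_apply,
    ContinuousLinearMap.smul_apply, ContinuousLinearMap.proj_apply,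
    smul_eq_mul, Pi.single_apply] at this
  rw [Matrix.one_apply, ← this]
  simp [pd, Finset.sum_add_distrib, Finset.sum_ite_eq', add_comm]

private lemma key_identity {n : ℕ}
    (ω : (Fin n → ℝ) → Fin n → Matrix (Fin n) (Fin n) ℝ)
    (hgauge : ∀ (x : Fin n → ℝ) a b, ∑ μ, x μ * ω x μ a b = 0)
    (e : (Fin n → ℝ) → Matrix (Fin n) (Fin n) ℝ)
    (hesmooth : ∀ a μ, ContDiff ℝ (⊤ : ℕ∞) fun x => e x a μ)
    (htorsion : ∀ (x : Fin n → ℝ) a μ ν,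
      pd μ (fun y => e y a ν) x - pd ν (fun y => e y a μ) x
        + ∑ b, (ω x μ a b * e x b ν - ω x ν a b * e x b μ) = 0)
    (hnormal : ∀ (x : Fin n → ℝ) a, ∑ μ, x μ * e x a μ = x a)
    (y : Fin n → ℝ) (a μ : Fin n) :
    ∑ ν, y ν * pd ν (fun z => e z a μ) y
      = (1 : Matrix (Fin n) (Fin n) ℝ) a μ - e y a μ + ∑ b, y b * ω y μ a b := by
  have ht : ∀ ν, pd ν (fun z => e z a μ) y = pd μ (fun z => e z a ν) y
      + ∑ b, (ω y μ a b * e y b ν - ω y ν a b * e y b μ) := by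
    intro ν
    have := htorsion y a μ ν
    linarith
  have h1 : ∑ ν, y ν * pd μ (fun z => e z a ν) y
      = (1 : Matrix (Fin n) (Fin n) ℝ) a μ - e y a μ := by
    have := normal_pd e hesmooth hnormal y a μ
    linarith
  calc ∑ ν, y ν * pd ν (fun z => e z a μ) y
      = ∑ ν, (y ν * pd μ (fun z => e z a ν) y
          + ∑ b, (ω y μ a b * (y ν * e y b ν) - (y ν * ω y ν a b) * e y b μ)) := by
        refine Finset.sum_congr rfl fun ν _ => ?_
        rw [ht ν, mul_add]
        congr 1
        rw [Finset.mul_sum]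
        exact Finset.sum_congr rfl fun b _ => by ring
    _ = (∑ ν, y ν * pd μ (fun z => e z a ν) y)
        + ∑ b, (ω y μ a b * (∑ ν, y ν * e y b ν)
            - (∑ ν, y ν * ω y ν a b) * e y b μ) := by
        rw [Finset.sum_add_distrib, Finset.sum_comm]
        congr 1
        refine Finset.sum_congr rfl fun b _ => ?_
        rw [Finset.sum_sub_distrib, Finset.mul_sum, Finset.sum_mul]
    _ = ((1 : Matrix (Fin n) (Fin n) ℝ) a μ - e y a μ) + ∑ b, y b * ω y μ a b := by
        rw [h1]
        congr 1
        refine Finset.sum_congr rfl fun b _ => ?_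
        rw [hnormal y b, hgauge y a b]
        ring
    _ = _ := by ring


/-- if the smooth spin-connection `ω` is in the Fock–Schwinger gauge and the
smooth vielbein `e` satisfies the torsion-free equation with respect to `ω` together with
the normal-coordinates condition `∑_μ x^μ e^a_μ(x) = x^a`, then the vielbein is recovered
from the spin-connection by `e^a_μ(x) = δ^a_μ + ∫₀¹ t ∑_b x^b ω^a_{bμ}(tx) dt`.
Here `ω x μ a b = ω^a_{bμ}(x)` and `e x a μ = e^a_μ(x)`. -/
theorem vielbein_from_spin_connection
    {n : ℕ} (hn : 1 ≤ n)
    (ω : (Fin n → ℝ) → Fin n → Matrix (Fin n) (Fin n) ℝ)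
    (hωsmooth : ∀ μ a b, ContDiff ℝ (⊤ : ℕ∞) fun x => ω x μ a b)
    (hgauge : ∀ (x : Fin n → ℝ) a b, ∑ μ, x μ * ω x μ a b = 0)
    (e : (Fin n → ℝ) → Matrix (Fin n) (Fin n) ℝ)
    (hesmooth : ∀ a μ, ContDiff ℝ (⊤ : ℕ∞) fun x => e x a μ)
    (htorsion : ∀ (x : Fin n → ℝ) a μ ν,
      pd μ (fun y => e y a ν) x - pd ν (fun y => e y a μ) x
        + ∑ b, (ω x μ a b * e x b ν - ω x ν a b * e x b μ) = 0)
    (hnormal : ∀ (x : Fin n → ℝ) a, ∑ μ, x μ * e x a μ = x a) :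
    ∀ (x : Fin n → ℝ) a μ,
      e x a μ = (1 : Matrix (Fin n) (Fin n) ℝ) a μ
        + ∫ t in (0:ℝ)..1, t • ∑ b, x b * ω (t • x) μ a b := by
  intro x a μ
  -- the derivative of t ↦ t * e(t•x)^a_μ is δ^a_μ + t ∑_b x^b ω^a_{bμ}(t•x)
  have hg : ∀ t : ℝ, HasDerivAt (fun t : ℝ => t * e (t • x) a μ)
      ((1 : Matrix (Fin n) (Fin n) ℝ) a μ + t * ∑ b, x b * ω (t • x) μ a b) t := by
    intro t
    have hc := comp_line (fun z => e z a μ) ((hesmooth a μ).differentiable (by simp)) x t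
    have hmul := (hasDerivAt_id t).fun_mul hc
    have hD : t * (∑ ν, x ν * pd ν (fun z => e z a μ) (t • x))
        = (1 : Matrix (Fin n) (Fin n) ℝ) a μ - e (t • x) a μ
          + t * ∑ b, x b * ω (t • x) μ a b := by
      have hkey := key_identity ω hgauge e hesmooth htorsion hnormal (t • x) a μ
      have hL : t * (∑ ν, x ν * pd ν (fun z => e z a μ) (t • x))
          = ∑ ν, (t • x) ν * pd ν (fun z => e z a μ) (t • x) := by
        rw [Finset.mul_sum]
        exact Finset.sum_congr rfl fun ν _ => by
          simp [smul_eq_mul]; ring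
      have hR : ∑ b, (t • x) b * ω (t • x) μ a b
          = t * ∑ b, x b * ω (t • x) μ a b := by
        rw [Finset.mul_sum]
        exact Finset.sum_congr rfl fun b _ => by
          simp [smul_eq_mul]; ring
      rw [hL, hkey, hR]
    refine hmul.congr_deriv ?_
    simp only [id_eq, one_mul]
    rw [hD]
    ring
  have hωc : ∀ b, Continuous fun t : ℝ => ω (t • x) μ a b := fun b =>
    (hωsmooth μ a b).continuous.comp (continuous_id.smul continuous_const)
  have hcont : Continuous fun t : ℝ => t * ∑ b, x b * ω (t • x) μ a b :=
    continuous_id.mul (continuous_finset_sum _ fun b _ => continuous_const.mul (hωc b))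
  have hint : IntervalIntegrable
      (fun t : ℝ => (1 : Matrix (Fin n) (Fin n) ℝ) a μ
        + t * ∑ b, x b * ω (t • x) μ a b) MeasureTheory.volume 0 1 :=
    (continuous_const.add hcont).intervalIntegrable 0 1
  have heval := intervalIntegral.integral_eq_sub_of_hasDerivAt
    (fun t _ => hg t) hint
  rw [intervalIntegral.integral_add (intervalIntegrable_const)
    (hcont.intervalIntegrable 0 1)] at heval
  simp only [one_smul, one_mul, zero_smul, zero_mul, sub_zero,
    intervalIntegral.integral_const, smul_eq_mul, sub_zero] at heval
  have : ∀ t : ℝ, t • ∑ b, x b * ω (t • x) μ a b = t * ∑ b, x b * ω (t • x) μ a b :=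
    fun t => smul_eq_mul ..
  simp only [this]
  rw [← heval]
end

section
/- Let ω : ℝⁿ → (Fin n → Matrix (Fin n) (Fin n) ℝ) be a smooth map, written ω^a_{bμ}(x), with each matrix ω_μ(x) antisymmetric, satisfying the Fock–Schwinger gauge condition ∑_μ x^μ ω^a_{bμ}(x) = 0, and the torsionless condition ∂_μ e^a_ν − ∂_ν e^a_μ + ∑_b (ω^a_{bμ} e^b_ν − ω^a_{bν} e^b_μ) = 0, where e^a_μ(x) := δ^a_μ + ∫₀¹ t ∑_b x^b ω^a_{bμ}(tx) dt. Assume e(x) is invertible for every x, with inverse entries e_a^μ(x). Then e satisfies: (one) ∑_μ x^μ e^a_μ(x) = x^a; (two) ∑_a x^a e^a_μ(x) = x^μ; and (three) ∑_μ e_a^μ(x) ( ∑_ν x^ν ∂_ν e^b_μ(x) + e^b_μ(x) ) is symmetric under interchange of a and b, for all x, a, b. -/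
open MeasureTheory intervalIntegral

/-- Differentiability of a parametric interval integral with smooth integrand. -/
lemma diffInt {n : ℕ} (F : (Fin n → ℝ) → ℝ → ℝ)
    (hF : ContDiff ℝ (⊤ : ℕ∞) fun p : (Fin n → ℝ) × ℝ => F p.1 p.2) (x₀ : Fin n → ℝ) :
    DifferentiableAt ℝ (fun x => ∫ t in (0:ℝ)..1, F x t) x₀ := by
  have hGd : Differentiable ℝ fun p : (Fin n → ℝ) × ℝ => F p.1 p.2 := hF.differentiable (by simp)
  have hGc : Continuous fun p : (Fin n → ℝ) × ℝ => F p.1 p.2 := hF.continuous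
  have hG' : Continuous (fderiv ℝ fun p : (Fin n → ℝ) × ℝ => F p.1 p.2) :=
    hF.continuous_fderiv (by simp)
  set F' : (Fin n → ℝ) → ℝ → (Fin n → ℝ) →L[ℝ] ℝ := fun x t =>
    ((fderiv ℝ (fun p : (Fin n → ℝ) × ℝ => F p.1 p.2) (x, t)).comp
      (ContinuousLinearMap.inl ℝ (Fin n → ℝ) ℝ)) with hF'def
  have hdiff : ∀ (x : Fin n → ℝ) (t : ℝ), HasFDerivAt (fun y => F y t) (F' x t) x := by
    intro x t
    have h1 : HasFDerivAt (fun p : (Fin n → ℝ) × ℝ => F p.1 p.2)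
        (fderiv ℝ (fun p : (Fin n → ℝ) × ℝ => F p.1 p.2) (x, t)) (x, t) :=
      (hGd (x, t)).hasFDerivAt
    have h2 : HasFDerivAt (fun y : Fin n → ℝ => (y, t))
        (ContinuousLinearMap.inl ℝ (Fin n → ℝ) ℝ) x := hasFDerivAt_prodMk_left x t
    exact h1.comp x h2
  obtain ⟨C, hC⟩ : ∃ C, ∀ p ∈ (Metric.closedBall x₀ 1 ×ˢ Set.Icc (-1:ℝ) 2),
      ‖fderiv ℝ (fun p : (Fin n → ℝ) × ℝ => F p.1 p.2) p‖ ≤ C :=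
    ((isCompact_closedBall x₀ 1).prod isCompact_Icc).exists_bound_of_continuousOn
      hG'.continuousOn
  have hinl : ‖ContinuousLinearMap.inl ℝ (Fin n → ℝ) ℝ‖ ≤ 1 :=
    ContinuousLinearMap.opNorm_le_bound _ zero_le_one fun y => by
      simp [Prod.norm_def]
  have hbd : ∀ t ∈ Set.uIoc (0:ℝ) 1, ∀ x ∈ Metric.ball x₀ 1, ‖F' x t‖ ≤ C := by
    intro t ht x hx
    rw [Set.uIoc_of_le zero_le_one] at ht
    have hp : (x, t) ∈ Metric.closedBall x₀ 1 ×ˢ Set.Icc (-1:ℝ) 2 :=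
      ⟨Metric.ball_subset_closedBall hx, ⟨by linarith [ht.1], by linarith [ht.2]⟩⟩
    have hCnn : (0:ℝ) ≤ C := (norm_nonneg _).trans (hC _ hp)
    calc ‖F' x t‖ ≤ ‖fderiv ℝ (fun p : (Fin n → ℝ) × ℝ => F p.1 p.2) (x, t)‖ *
          ‖ContinuousLinearMap.inl ℝ (Fin n → ℝ) ℝ‖ := ContinuousLinearMap.opNorm_comp_le _ _
      _ ≤ C * 1 := mul_le_mul (hC _ hp) hinl (norm_nonneg _) hCnn
      _ = C := mul_one C
  have key := intervalIntegral.hasFDerivAt_integral_of_dominated_of_fderiv_le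
    (μ := volume) (F := F) (F' := F') (x₀ := x₀) (a := (0:ℝ)) (b := 1)
    (bound := fun _ => C) (Metric.ball_mem_nhds x₀ zero_lt_one)
    (Filter.Eventually.of_forall fun x =>
      (hGc.comp (Continuous.prodMk_right x)).aestronglyMeasurable)
    ((hGc.comp (Continuous.prodMk_right x₀)).intervalIntegrable 0 1)
    (((hG'.comp (Continuous.prodMk_right x₀)).clm_comp continuous_const).aestronglyMeasurable)
    (Filter.Eventually.of_forall hbd)
    intervalIntegrable_const
    (Filter.Eventually.of_forall fun t _ x _ => hdiff x t)
  exact key.differentiableAt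

/-- if a smooth antisymmetric-matrix-valued spin-connection `ω` satisfies
the Fock–Schwinger gauge condition and the torsionless condition with
`e^a_μ(x) := δ^a_μ + ∫₀¹ t ∑_b x^b ω^a_{bμ}(tx) dt`, and `e(x)` is invertible for every
`x` (inverse entries `e_a^μ(x) = einv x μ a`), then `e` satisfies
(one) `∑_μ x^μ e^a_μ = x^a`, (two) `∑_a x^a e^a_μ = x^μ`, and
(three) `∑_μ e_a^μ(∑_ν x^ν ∂_ν e^b_μ + e^b_μ)` symmetric under `a ↔ b`.
Here `ω x μ a b = ω^a_{bμ}(x)` and `e x a μ = e^a_μ(x)`. -/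
theorem gauge_torsionless_implies_vielbein_conditions
    {n : ℕ} (hn : 1 ≤ n)
    (ω : (Fin n → ℝ) → Fin n → Matrix (Fin n) (Fin n) ℝ)
    (hωsmooth : ∀ μ a b, ContDiff ℝ (⊤ : ℕ∞) fun x => ω x μ a b)
    (hωanti : ∀ (x : Fin n → ℝ) μ a b, ω x μ a b = - ω x μ b a)
    (hgauge : ∀ (x : Fin n → ℝ) a b, ∑ μ, x μ * ω x μ a b = 0)
    (e : (Fin n → ℝ) → Matrix (Fin n) (Fin n) ℝ)
    (he : ∀ (x : Fin n → ℝ) a μ,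
      e x a μ = (1 : Matrix (Fin n) (Fin n) ℝ) a μ
        + ∫ t in (0:ℝ)..1, t • ∑ b, x b * ω (t • x) μ a b)
    (htorsion : ∀ (x : Fin n → ℝ) a μ ν,
      pd μ (fun y => e y a ν) x - pd ν (fun y => e y a μ) x
        + ∑ b, (ω x μ a b * e x b ν - ω x ν a b * e x b μ) = 0)
    (einv : (Fin n → ℝ) → Matrix (Fin n) (Fin n) ℝ)
    (hinv : ∀ x, einv x * e x = 1) :
    (∀ (x : Fin n → ℝ) a, ∑ μ, x μ * e x a μ = x a)
    ∧ (∀ (x : Fin n → ℝ) μ, ∑ a, x a * e x a μ = x μ)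
    ∧ (∀ (x : Fin n → ℝ) a b,
      ∑ μ, einv x μ a * ((∑ ν, x ν * pd ν (fun y => e y b μ) x) + e x b μ)
        = ∑ μ, einv x μ b * ((∑ ν, x ν * pd ν (fun y => e y a μ) x) + e x a μ)) := by
  -- joint smoothness of the integrand
  have hsm : ∀ c ν, ContDiff ℝ (⊤ : ℕ∞)
      fun p : (Fin n → ℝ) × ℝ => p.2 • ∑ d, p.1 d * ω (p.2 • p.1) ν c d := by
    intro c ν
    have hs : ContDiff ℝ (⊤ : ℕ∞) fun p : (Fin n → ℝ) × ℝ => p.2 • p.1 :=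
      contDiff_snd.smul contDiff_fst
    refine contDiff_snd.smul (ContDiff.sum fun d _ => ContDiff.mul ?_
      ((hωsmooth ν c d).comp hs))
    exact contDiff_pi.mp contDiff_fst d
  have hcont : ∀ (x : Fin n → ℝ) c ν, Continuous fun t : ℝ =>
      t • ∑ d, x d * ω (t • x) ν c d := fun x c ν =>
    (hsm c ν).continuous.comp (Continuous.prodMk_right x)
  -- part one
  have hone : ∀ (x : Fin n → ℝ) a, ∑ μ, x μ * e x a μ = x a := by
    intro x a
    have step : ∑ μ, x μ * e x a μ
        = (∑ μ, x μ * (1 : Matrix (Fin n) (Fin n) ℝ) a μ)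
          + ∫ t in (0:ℝ)..1, ∑ μ, x μ * (t • ∑ b, x b * ω (t • x) μ a b) := by
      rw [intervalIntegral.integral_finset_sum
        (fun μ _ => (continuous_const.fun_mul (hcont x a μ)).intervalIntegrable 0 1),
        ← Finset.sum_add_distrib]
      refine Finset.sum_congr rfl fun μ _ => ?_
      rw [he x a μ, mul_add, intervalIntegral.integral_const_mul]
    rw [step]
    have h1 : ∑ μ, x μ * (1 : Matrix (Fin n) (Fin n) ℝ) a μ = x a := by
      simp [Matrix.one_apply, mul_ite]
    have h2 : ∀ t : ℝ, ∑ μ, x μ * (t • ∑ b, x b * ω (t • x) μ a b) = 0 := by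
      intro t
      have hterm : ∀ μ, x μ * (t • ∑ b, x b * ω (t • x) μ a b)
          = ∑ b, x b * ((t • x) μ * ω (t • x) μ a b) := by
        intro μ
        simp only [smul_eq_mul, Pi.smul_apply, Finset.mul_sum]
        exact Finset.sum_congr rfl fun b _ => by ring
      rw [Finset.sum_congr rfl fun μ _ => hterm μ, Finset.sum_comm]
      refine Finset.sum_eq_zero fun b _ => ?_
      rw [← Finset.mul_sum, hgauge (t • x) a b, mul_zero]
    rw [h1]
    simp only [h2, intervalIntegral.integral_zero, add_zero]
  -- part two
  have htwo : ∀ (x : Fin n → ℝ) μ, ∑ a, x a * e x a μ = x μ := by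
    intro x μ
    have step : ∑ a, x a * e x a μ
        = (∑ a, x a * (1 : Matrix (Fin n) (Fin n) ℝ) a μ)
          + ∫ t in (0:ℝ)..1, ∑ a, x a * (t • ∑ b, x b * ω (t • x) μ a b) := by
      rw [intervalIntegral.integral_finset_sum
        (fun a _ => (continuous_const.fun_mul (hcont x a μ)).intervalIntegrable 0 1),
        ← Finset.sum_add_distrib]
      refine Finset.sum_congr rfl fun a _ => ?_
      rw [he x a μ, mul_add, intervalIntegral.integral_const_mul]
    rw [step]
    have h1 : ∑ a, x a * (1 : Matrix (Fin n) (Fin n) ℝ) a μ = x μ := by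
      simp [Matrix.one_apply, mul_ite]
    have h2 : ∀ t : ℝ, ∑ a, x a * (t • ∑ b, x b * ω (t • x) μ a b) = 0 := by
      intro t
      have key : ∀ (y : Fin n → ℝ), ∑ a, ∑ b, x a * (x b * ω y μ a b) = 0 := by
        intro y
        have hcomm : ∑ a, ∑ b, x a * (x b * ω y μ a b)
            = ∑ b, ∑ a, x a * (x b * ω y μ a b) := Finset.sum_comm
        have hneg : -∑ a, ∑ b, x a * (x b * ω y μ a b)
            = ∑ a, ∑ b, x b * (x a * ω y μ b a) := by
          rw [← Finset.sum_neg_distrib]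
          refine Finset.sum_congr rfl fun a _ => ?_
          rw [← Finset.sum_neg_distrib]
          refine Finset.sum_congr rfl fun b _ => ?_
          rw [hωanti y μ b a]; ring
        have hself : ∑ a, ∑ b, x a * (x b * ω y μ a b)
            = -∑ a, ∑ b, x a * (x b * ω y μ a b) := by
          rw [hneg, hcomm]
        linarith
      have hterm : ∑ a, x a * (t • ∑ b, x b * ω (t • x) μ a b)
          = t * ∑ a, ∑ b, x a * (x b * ω (t • x) μ a b) := by
        rw [Finset.mul_sum]
        refine Finset.sum_congr rfl fun a _ => ?_
        simp only [smul_eq_mul, Finset.mul_sum]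
        exact Finset.sum_congr rfl fun b _ => by ring
      rw [hterm, key (t • x), mul_zero]
    rw [h1]
    simp only [h2, intervalIntegral.integral_zero, add_zero]
  refine ⟨hone, htwo, ?_⟩
  -- differentiability of the entries of e
  have hed : ∀ (x : Fin n → ℝ) c ν, DifferentiableAt ℝ (fun y => e y c ν) x := by
    intro x c ν
    have h1 : (fun y => e y c ν) = fun y => (1 : Matrix (Fin n) (Fin n) ℝ) c ν
        + ∫ t in (0:ℝ)..1, t • ∑ d, y d * ω (t • y) ν c d := funext fun y => he y c ν
    rw [h1]
    exact (diffInt (fun z t => t • ∑ d, z d * ω (t • z) ν c d) (hsm c ν) x).const_add _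
  intro x a b
  -- derivative of part one, as identity of functions
  have hstar : ∀ c μ, ∑ ν, x ν * pd μ (fun y => e y c ν) x
      = (1 : Matrix (Fin n) (Fin n) ℝ) c μ - e x c μ := by
    intro c μ
    have hL : HasFDerivAt (fun y => ∑ ν, y ν * e y c ν)
        (∑ ν, (x ν • fderiv ℝ (fun y => e y c ν) x
          + e x c ν • ContinuousLinearMap.proj (R := ℝ) (φ := fun _ : Fin n => ℝ) ν)) x :=
      HasFDerivAt.fun_sum fun ν _ =>
        ((ContinuousLinearMap.proj (R := ℝ) (φ := fun _ : Fin n => ℝ) ν).hasFDerivAt).fun_mul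
          ((hed x c ν).hasFDerivAt)
    have hR : HasFDerivAt (fun y : Fin n → ℝ => ∑ ν, y ν * e y c ν)
        (ContinuousLinearMap.proj (R := ℝ) (φ := fun _ : Fin n => ℝ) c) x :=
      ((ContinuousLinearMap.proj (R := ℝ) (φ := fun _ : Fin n => ℝ) c).hasFDerivAt).congr_of_eventuallyEq
        (Filter.Eventually.of_forall fun y => hone y c)
    have huniq := hL.unique hR
    have happ := congrArg (fun L : (Fin n → ℝ) →L[ℝ] ℝ => L (Pi.single μ 1)) huniq
    simp only [ContinuousLinearMap.sum_apply, ContinuousLinearMap.add_apply,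
      ContinuousLinearMap.smul_apply, ContinuousLinearMap.proj_apply, smul_eq_mul] at happ
    rw [Finset.sum_add_distrib] at happ
    have hsingle : ∑ ν, e x c ν * (Pi.single μ 1 : Fin n → ℝ) ν = e x c μ := by
      simp [Pi.single_apply]
    rw [hsingle] at happ
    have honemat : (1 : Matrix (Fin n) (Fin n) ℝ) c μ = (Pi.single μ 1 : Fin n → ℝ) c := by
      rcases eq_or_ne c μ with h | h
      · subst h; simp [Matrix.one_apply]
      · simp [Matrix.one_apply, Pi.single_apply, h, h.symm]
    simp only [pd]
    rw [honemat]
    linarith [happ]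
  -- derivative of part two, as identity of functions
  have hstar2 : ∀ ν μ, ∑ c, x c * pd ν (fun y => e y c μ) x
      = (1 : Matrix (Fin n) (Fin n) ℝ) ν μ - e x ν μ := by
    intro ν μ
    have hL : HasFDerivAt (fun y => ∑ c, y c * e y c μ)
        (∑ c, (x c • fderiv ℝ (fun y => e y c μ) x
          + e x c μ • ContinuousLinearMap.proj (R := ℝ) (φ := fun _ : Fin n => ℝ) c)) x :=
      HasFDerivAt.fun_sum fun c _ =>
        ((ContinuousLinearMap.proj (R := ℝ) (φ := fun _ : Fin n => ℝ) c).hasFDerivAt).fun_mul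
          ((hed x c μ).hasFDerivAt)
    have hR : HasFDerivAt (fun y : Fin n → ℝ => ∑ c, y c * e y c μ)
        (ContinuousLinearMap.proj (R := ℝ) (φ := fun _ : Fin n => ℝ) μ) x :=
      ((ContinuousLinearMap.proj (R := ℝ) (φ := fun _ : Fin n => ℝ) μ).hasFDerivAt).congr_of_eventuallyEq
        (Filter.Eventually.of_forall fun y => htwo y μ)
    have huniq := hL.unique hR
    have happ := congrArg (fun L : (Fin n → ℝ) →L[ℝ] ℝ => L (Pi.single ν 1)) huniq
    simp only [ContinuousLinearMap.sum_apply, ContinuousLinearMap.add_apply,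
      ContinuousLinearMap.smul_apply, ContinuousLinearMap.proj_apply, smul_eq_mul] at happ
    rw [Finset.sum_add_distrib] at happ
    have hsingle : ∑ c, e x c μ * (Pi.single ν 1 : Fin n → ℝ) c = e x ν μ := by
      simp [Pi.single_apply]
    rw [hsingle] at happ
    have honemat : (1 : Matrix (Fin n) (Fin n) ℝ) ν μ = (Pi.single ν 1 : Fin n → ℝ) μ := by
      rcases eq_or_ne ν μ with h | h
      · subst h; simp [Matrix.one_apply]
      · simp [Matrix.one_apply, Pi.single_apply, h, h.symm]
    simp only [pd]
    rw [honemat]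
    linarith [happ]
  -- radial identity
  have hrad : ∀ c μ, (∑ ν, x ν * pd ν (fun y => e y c μ) x) + e x c μ
      = (1 : Matrix (Fin n) (Fin n) ℝ) c μ + ∑ d, x d * ω x μ c d := by
    intro c μ
    have hQ : ∑ ν, x ν * ∑ d, (ω x ν c d * e x d μ - ω x μ c d * e x d ν)
        = -∑ d, x d * ω x μ c d := by
      have h1 : ∀ ν, x ν * ∑ d, (ω x ν c d * e x d μ - ω x μ c d * e x d ν)
          = ∑ d, (x ν * ω x ν c d * e x d μ - x ν * (ω x μ c d * e x d ν)) := by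
        intro ν
        rw [Finset.mul_sum]
        exact Finset.sum_congr rfl fun d _ => by ring
      rw [Finset.sum_congr rfl fun ν _ => h1 ν, Finset.sum_comm, ← Finset.sum_neg_distrib]
      refine Finset.sum_congr rfl fun d _ => ?_
      rw [Finset.sum_sub_distrib]
      have h2 : ∑ ν, x ν * ω x ν c d * e x d μ = 0 := by
        rw [← Finset.sum_mul, hgauge x c d, zero_mul]
      have h3 : ∑ ν, x ν * (ω x μ c d * e x d ν) = ω x μ c d * x d := by
        have : ∑ ν, x ν * (ω x μ c d * e x d ν) = ω x μ c d * ∑ ν, x ν * e x d ν := by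
          rw [Finset.mul_sum]
          exact Finset.sum_congr rfl fun ν _ => by ring
        rw [this, hone x d]
      rw [h2, h3]
      ring
    have htt : ∀ ν, x ν * pd ν (fun y => e y c μ) x
        = x ν * pd μ (fun y => e y c ν) x
          - x ν * ∑ d, (ω x ν c d * e x d μ - ω x μ c d * e x d ν) := by
      intro ν
      have h := htorsion x c ν μ
      have h' : pd ν (fun y => e y c μ) x = pd μ (fun y => e y c ν) x
          - ∑ d, (ω x ν c d * e x d μ - ω x μ c d * e x d ν) := by linarith
      rw [h']
      ring
    rw [Finset.sum_congr rfl fun ν _ => htt ν, Finset.sum_sub_distrib, hQ, hstar c μ]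
    ring
  -- key antisymmetry identity
  have hK : ∀ μ ν, e x μ ν - e x ν μ
      = ∑ c, ((∑ d, x d * ω x ν c d) * e x c μ - (∑ d, x d * ω x μ c d) * e x c ν) := by
    intro μ ν
    have h1 := hstar2 μ ν
    have h2 := hstar2 ν μ
    have honesymm : (1 : Matrix (Fin n) (Fin n) ℝ) μ ν = (1 : Matrix (Fin n) (Fin n) ℝ) ν μ := by
      rcases eq_or_ne μ ν with h | h
      · rw [h]
      · simp [Matrix.one_apply, h, h.symm]
    have hQ : ∑ c, x c * pd μ (fun y => e y c ν) x - ∑ c, x c * pd ν (fun y => e y c μ) x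
        = ∑ c, ∑ d, x c * (ω x ν c d * e x d μ - ω x μ c d * e x d ν) := by
      rw [← Finset.sum_sub_distrib]
      refine Finset.sum_congr rfl fun c _ => ?_
      have h := htorsion x c μ ν
      have h' : pd μ (fun y => e y c ν) x - pd ν (fun y => e y c μ) x
          = ∑ d, (ω x ν c d * e x d μ - ω x μ c d * e x d ν) := by
        have hd : ∑ d, (ω x ν c d * e x d μ - ω x μ c d * e x d ν)
            = -∑ d, (ω x μ c d * e x d ν - ω x ν c d * e x d μ) := by
          rw [← Finset.sum_neg_distrib]
          exact Finset.sum_congr rfl fun d _ => by ring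
        rw [hd]
        linarith
      rw [← mul_sub, h', Finset.mul_sum]
    have hE : e x ν μ - e x μ ν
        = ∑ c, ∑ d, x c * (ω x ν c d * e x d μ - ω x μ c d * e x d ν) := by
      rw [← hQ, h1, h2, honesymm]
      ring
    have hswap : ∑ c, ∑ d, x c * (ω x ν c d * e x d μ - ω x μ c d * e x d ν)
        = -∑ c, ((∑ d, x d * ω x ν c d) * e x c μ - (∑ d, x d * ω x μ c d) * e x c ν) := by
      rw [Finset.sum_comm, ← Finset.sum_neg_distrib]
      refine Finset.sum_congr rfl fun d _ => ?_
      have hterm : ∀ c', x c' * (ω x ν c' d * e x d μ - ω x μ c' d * e x d ν)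
          = x c' * ω x μ d c' * e x d ν - x c' * ω x ν d c' * e x d μ := by
        intro c'
        rw [hωanti x ν c' d, hωanti x μ c' d]
        ring
      rw [Finset.sum_congr rfl fun c' _ => hterm c', Finset.sum_sub_distrib,
        ← Finset.sum_mul, ← Finset.sum_mul]
      ring
    linarith [hE, hswap]
  -- assemble into matrix symmetry
  set Wm : Matrix (Fin n) (Fin n) ℝ := Matrix.of fun c μ => ∑ d, x d * ω x μ c d with hWm
  set M : Matrix (Fin n) (Fin n) ℝ := 1 + Wm with hM
  have hEM : (e x).transpose * M = M.transpose * e x := by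
    ext ν μ
    simp only [Matrix.mul_apply, Matrix.transpose_apply, hM, Matrix.add_apply,
      Matrix.one_apply, hWm, Matrix.of_apply]
    have l1 : ∑ c, e x c ν * ((if c = μ then (1:ℝ) else 0) + ∑ d, x d * ω x μ c d)
        = e x μ ν + ∑ c, ((∑ d, x d * ω x μ c d) * e x c ν) := by
      have hterm : ∀ c, e x c ν * ((if c = μ then (1:ℝ) else 0) + ∑ d, x d * ω x μ c d)
          = (if c = μ then e x c ν else 0) + (∑ d, x d * ω x μ c d) * e x c ν := by
        intro c
        rcases eq_or_ne c μ with h | h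
        · simp [h]
          ring
        · simp [h]
          ring
      rw [Finset.sum_congr rfl fun c _ => hterm c, Finset.sum_add_distrib,
        Finset.sum_ite_eq' Finset.univ μ fun c => e x c ν]
      simp
    have l2 : ∑ c, (((if c = ν then (1:ℝ) else 0) + ∑ d, x d * ω x ν c d) * e x c μ)
        = e x ν μ + ∑ c, ((∑ d, x d * ω x ν c d) * e x c μ) := by
      have hterm : ∀ c, ((if c = ν then (1:ℝ) else 0) + ∑ d, x d * ω x ν c d) * e x c μ
          = (if c = ν then e x c μ else 0) + (∑ d, x d * ω x ν c d) * e x c μ := by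
        intro c
        rcases eq_or_ne c ν with h | h <;> simp [h] <;> ring
      rw [Finset.sum_congr rfl fun c _ => hterm c, Finset.sum_add_distrib,
        Finset.sum_ite_eq' Finset.univ ν fun c => e x c μ]
      simp
    rw [l1, l2]
    have hk := hK μ ν
    rw [Finset.sum_sub_distrib] at hk
    linarith
  have hEV : e x * einv x = 1 := mul_eq_one_comm.mp (hinv x)
  have hsym : M * einv x = (M * einv x).transpose := by
    calc M * einv x = ((einv x).transpose * (e x).transpose) * (M * einv x) := by
          rw [← Matrix.transpose_mul, hEV, Matrix.transpose_one, Matrix.one_mul]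
      _ = (einv x).transpose * (((e x).transpose * M) * einv x) := by
          rw [Matrix.mul_assoc, Matrix.mul_assoc]
      _ = (einv x).transpose * ((M.transpose * e x) * einv x) := by rw [hEM]
      _ = (einv x).transpose * (M.transpose * (e x * einv x)) := by rw [Matrix.mul_assoc]
      _ = (einv x).transpose * M.transpose := by rw [hEV, Matrix.mul_one]
      _ = (M * einv x).transpose := (Matrix.transpose_mul _ _).symm
  have hform : ∀ c c', ∑ μ, einv x μ c * ((∑ ν, x ν * pd ν (fun y => e y c' μ) x) + e x c' μ)
      = (M * einv x) c' c := by
    intro c c'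
    have hterm : ∀ μ, einv x μ c * ((∑ ν, x ν * pd ν (fun y => e y c' μ) x) + e x c' μ)
        = einv x μ c * ((1 : Matrix (Fin n) (Fin n) ℝ) c' μ + ∑ d, x d * ω x μ c' d) :=
      fun μ => by rw [hrad c' μ]
    rw [Finset.sum_congr rfl fun μ _ => hterm μ, Matrix.mul_apply]
    refine Finset.sum_congr rfl fun μ _ => ?_
    simp only [hM, hWm, Matrix.add_apply, Matrix.of_apply]
    ring
  rw [hform a b, hform b a]
  have hent := Matrix.ext_iff.mpr hsym b a
  rw [Matrix.transpose_apply] at hent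
  exact hent
end

section
/- Let g : ℝⁿ → Matrix (Fin n) (Fin n) ℝ be a smooth map, written g_{μν}(x), with g_{μν} = g_{νμ} and satisfying the normal-coordinates condition ∑_μ x^μ g_{μν}(x) = x^ν for all x, ν. Let e : ℝⁿ → Matrix (Fin n) (Fin n) ℝ be a smooth map, written e^a_μ(x), with e(x) invertible for every x (inverse entries e_a^μ(x)), with e(0) equal to the identity matrix, such that for every x ∈ ℝⁿ and every t ∈ [0,1]: (d/dt) e^a_μ(tx) = ½ ∑_ν e_a^ν(tx) (d/dt) g_{νμ}(tx). Then: (one) ∑_μ x^μ e^a_μ(x) = x^a for all x, a; (two) ∑_a x^a e^a_μ(x) = x^μ for all x, μ; (three) ∑_μ e_a^μ(x) ( ∑_ν x^ν ∂_ν e^b_μ(x) + e^b_μ(x) ) is symmetric under interchange of a and b for all x, a, b; and g_{μν}(x) = ∑_a e^a_μ(x) e^a_ν(x) for all x, μ, ν. -/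
lemma const01 (f : ℝ → ℝ) (hf : Differentiable ℝ f)
    (h : ∀ t ∈ Set.Icc (0:ℝ) 1, deriv f t = 0) : f 1 = f 0 := by
  have := constant_of_derivWithin_zero (a := (0:ℝ)) (b := 1) hf.differentiableOn
    (fun t ht => by
      rw [(hf t).derivWithin ((uniqueDiffOn_Icc zero_lt_one) t (Set.Ico_subset_Icc_self ht))]
      exact h t (Set.Ico_subset_Icc_self ht))
  exact this 1 (Set.right_mem_Icc.2 zero_le_one)

lemma rayCD {n : ℕ} (f : (Fin n → ℝ) → ℝ) (hf : ContDiff ℝ (⊤ : ℕ∞) f) (x : Fin n → ℝ) :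
    ContDiff ℝ (⊤ : ℕ∞) (fun s : ℝ => f (s • x)) :=
  hf.comp (contDiff_id.smul contDiff_const)

lemma ray_hasDeriv {n : ℕ} (f : (Fin n → ℝ) → ℝ) (hf : ContDiff ℝ (⊤ : ℕ∞) f) (x : Fin n → ℝ) :
    HasDerivAt (fun s : ℝ => f (s • x)) (∑ ν, x ν * pd ν f x) 1 := by
  have hL : HasDerivAt (fun s : ℝ => s • x) ((1:ℝ) • x) 1 := (hasDerivAt_id 1).smul_const x
  have hF : HasFDerivAt f (fderiv ℝ f x) ((1:ℝ) • x) := by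
    rw [one_smul]; exact (hf.differentiable (by simp) x).hasFDerivAt
  have h2 := hF.comp_hasDerivAt 1 hL
  rw [one_smul] at h2
  have hx : x = ∑ ν, x ν • (Pi.single ν 1 : Fin n → ℝ) := by
    funext j; simp [Pi.single_apply]
  have key : (fderiv ℝ f x) x = ∑ ν, x ν * pd ν f x := by
    calc (fderiv ℝ f x) x = (fderiv ℝ f x) (∑ ν, x ν • (Pi.single ν 1 : Fin n → ℝ)) := by
          rw [← hx]
    _ = ∑ ν, x ν * pd ν f x := by
          rw [map_sum]
          refine Finset.sum_congr rfl fun ν _ => ?_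
          rw [(fderiv ℝ f x).map_smul]; rfl
  rw [key] at h2
  exact h2

lemma hsingle {n : ℕ} (f : Fin n → ℝ) (μ0 : Fin n) :
    ∑ μ, (Pi.single μ0 1 : Fin n → ℝ) μ * f μ = f μ0 := by
  simp [Pi.single_apply]

/-- let `g` be a smooth symmetric metric on `ℝⁿ` in normal coordinates
(`∑_μ x^μ g_{μν}(x) = x^ν`), and let `e` be a smooth pointwise-invertible vielbein
(inverse entries `e_a^μ(x) = einv x μ a`) with `e(0) = 1` solving the ray ODE
`(d/dt) e^a_μ(tx) = ½ ∑_ν e_a^ν(tx) (d/dt) g_{νμ}(tx)` for `t ∈ [0,1]`. Then `e`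
satisfies conditions (one), (two), (three), and `g_{μν} = ∑_a e^a_μ e^a_ν`.
Here `g x μ ν = g_{μν}(x)` and `e x a μ = e^a_μ(x)`. -/
theorem ray_ode_solution_gives_vielbein_of_metric
    {n : ℕ} (hn : 1 ≤ n)
    (g : (Fin n → ℝ) → Matrix (Fin n) (Fin n) ℝ)
    (hgsmooth : ∀ μ ν, ContDiff ℝ (⊤ : ℕ∞) fun x => g x μ ν)
    (hgsymm : ∀ (x : Fin n → ℝ) μ ν, g x μ ν = g x ν μ)
    (hnormal : ∀ (x : Fin n → ℝ) ν, ∑ μ, x μ * g x μ ν = x ν)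
    (e : (Fin n → ℝ) → Matrix (Fin n) (Fin n) ℝ)
    (hesmooth : ∀ a μ, ContDiff ℝ (⊤ : ℕ∞) fun x => e x a μ)
    (einv : (Fin n → ℝ) → Matrix (Fin n) (Fin n) ℝ)
    (hinv : ∀ x, einv x * e x = 1)
    (hzero : e 0 = 1)
    (hode : ∀ (x : Fin n → ℝ) a μ, ∀ t ∈ Set.Icc (0:ℝ) 1,
      deriv (fun s => e (s • x) a μ) t
        = (1 / 2) * ∑ ν, einv (t • x) ν a * deriv (fun s => g (s • x) ν μ) t) :
    (∀ (x : Fin n → ℝ) a, ∑ μ, x μ * e x a μ = x a)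
    ∧ (∀ (x : Fin n → ℝ) μ, ∑ a, x a * e x a μ = x μ)
    ∧ (∀ (x : Fin n → ℝ) a b,
      ∑ μ, einv x μ a * ((∑ ν, x ν * pd ν (fun y => e y b μ) x) + e x b μ)
        = ∑ μ, einv x μ b * ((∑ ν, x ν * pd ν (fun y => e y a μ) x) + e x a μ))
    ∧ (∀ (x : Fin n → ℝ) μ ν, g x μ ν = ∑ a, e x a μ * e x a ν) := by
  -- differentiability along rays
  have hEd : ∀ (x : Fin n → ℝ) a μ, Differentiable ℝ (fun s : ℝ => e (s • x) a μ) :=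
    fun x a μ => (rayCD _ (hesmooth a μ) x).differentiable (by simp)
  have hGd : ∀ (x : Fin n → ℝ) μ ν, Differentiable ℝ (fun s : ℝ => g (s • x) μ ν) :=
    fun x μ ν => (rayCD _ (hgsmooth μ ν) x).differentiable (by simp)
  have dGsym : ∀ (x : Fin n → ℝ) μ ν t,
      deriv (fun s : ℝ => g (s • x) μ ν) t = deriv (fun s : ℝ => g (s • x) ν μ) t := by
    intro x μ ν t
    congr 1
    funext s
    exact hgsymm _ _ _
  -- the normal-coordinates identity along rays
  have hψ : ∀ (x : Fin n → ℝ) ν (t : ℝ), ∑ μ, x μ * g (t • x) μ ν = x ν := by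
    intro x ν
    have hc : Continuous fun t : ℝ => ∑ μ, x μ * g (t • x) μ ν := by
      apply continuous_finset_sum
      intro μ _
      exact continuous_const.mul (hGd x μ ν).continuous
    have heq : Set.EqOn (fun t : ℝ => ∑ μ, x μ * g (t • x) μ ν) (fun _ => x ν) {(0:ℝ)}ᶜ := by
      intro t ht
      have h1 := hnormal (t • x) ν
      simp only [Pi.smul_apply, smul_eq_mul] at h1
      have h2 : t * (∑ μ, x μ * g (t • x) μ ν) = t * x ν := by
        rw [Finset.mul_sum]
        rw [← h1]
        exact Finset.sum_congr rfl fun μ _ => by ring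
      exact mul_left_cancel₀ (by simpa using ht) h2
    have := Continuous.ext_on (dense_compl_singleton (0:ℝ)) hc continuous_const heq
    intro t
    exact congrFun this t
  -- derivative of the normal identity : ∑ μ x μ * dG μ ν = 0
  have hdGzero : ∀ (x : Fin n → ℝ) ν (t : ℝ),
      ∑ μ, x μ * deriv (fun s : ℝ => g (s • x) μ ν) t = 0 := by
    intro x ν t
    have h1 : HasDerivAt (fun t : ℝ => ∑ μ, x μ * g (t • x) μ ν)
        (∑ μ, x μ * deriv (fun s : ℝ => g (s • x) μ ν) t) t :=
      HasDerivAt.fun_sum fun μ _ => ((hGd x μ ν t).hasDerivAt).const_mul (x μ)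
    have h2 : HasDerivAt (fun t : ℝ => ∑ μ, x μ * g (t • x) μ ν) 0 t := by
      have heq : (fun t : ℝ => ∑ μ, x μ * g (t • x) μ ν) = fun _ => x ν :=
        funext (hψ x ν)
      rw [heq]
      exact hasDerivAt_const t _
    exact h1.unique h2
  -- claim (one)
  have hone : ∀ (x : Fin n → ℝ) a, ∑ μ, x μ * e x a μ = x a := by
    intro x a
    have hφdiff : Differentiable ℝ (fun t : ℝ => ∑ μ, x μ * e (t • x) a μ) := by
      intro t
      exact (HasDerivAt.fun_sum fun μ _ =>
        ((hEd x a μ t).hasDerivAt).const_mul (x μ)).differentiableAt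
    have hφ' : ∀ t ∈ Set.Icc (0:ℝ) 1,
        deriv (fun t : ℝ => ∑ μ, x μ * e (t • x) a μ) t = 0 := by
      intro t ht
      have hD : HasDerivAt (fun t : ℝ => ∑ μ, x μ * e (t • x) a μ)
          (∑ μ, x μ * deriv (fun s : ℝ => e (s • x) a μ) t) t :=
        HasDerivAt.fun_sum fun μ _ => ((hEd x a μ t).hasDerivAt).const_mul (x μ)
      rw [hD.deriv]
      calc ∑ μ, x μ * deriv (fun s : ℝ => e (s • x) a μ) t
          = ∑ μ, x μ * ((1/2) * ∑ ν, einv (t • x) ν a * deriv (fun s : ℝ => g (s • x) ν μ) t) :=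
            Finset.sum_congr rfl fun μ _ => by rw [hode x a μ t ht]
        _ = ∑ μ, ∑ ν, (1/2) * (einv (t • x) ν a * (x μ * deriv (fun s : ℝ => g (s • x) μ ν) t)) := by
            refine Finset.sum_congr rfl fun μ _ => ?_
            rw [Finset.mul_sum, Finset.mul_sum]
            refine Finset.sum_congr rfl fun ν _ => ?_
            rw [dGsym x μ ν t]
            ring
        _ = ∑ ν, (1/2) * (einv (t • x) ν a * ∑ μ, x μ * deriv (fun s : ℝ => g (s • x) μ ν) t) := by
            rw [Finset.sum_comm]
            refine Finset.sum_congr rfl fun ν _ => ?_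
            simp only [Finset.mul_sum]
        _ = 0 := by simp [hdGzero x]
    have hconst := const01 _ hφdiff hφ'
    simp only [one_smul, zero_smul, hzero] at hconst
    rw [hconst]
    simp [Matrix.one_apply]
  -- constancy of EᵀE - G along rays
  have hF : ∀ (x : Fin n → ℝ) μ ν,
      (∑ a, e x a μ * e x a ν) - g x μ ν = (if μ = ν then (1:ℝ) else 0) - g 0 μ ν := by
    intro x μ ν
    have hcollapse : ∀ (t : ℝ) (ρ κ : Fin n),
        ∑ a, einv (t • x) ρ a * e (t • x) a κ = if ρ = κ then (1:ℝ) else 0 := by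
      intro t ρ κ
      rw [← Matrix.mul_apply, hinv]
      simp [Matrix.one_apply]
    have hFdiff : Differentiable ℝ
        (fun t : ℝ => (∑ a, e (t • x) a μ * e (t • x) a ν) - g (t • x) μ ν) := by
      intro t
      exact ((HasDerivAt.fun_sum fun a _ =>
        ((hEd x a μ t).hasDerivAt).fun_mul ((hEd x a ν t).hasDerivAt)).fun_sub
        ((hGd x μ ν t).hasDerivAt)).differentiableAt
    have hF' : ∀ t ∈ Set.Icc (0:ℝ) 1,
        deriv (fun t : ℝ => (∑ a, e (t • x) a μ * e (t • x) a ν) - g (t • x) μ ν) t = 0 := by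
      intro t ht
      have hD : HasDerivAt
          (fun t : ℝ => (∑ a, e (t • x) a μ * e (t • x) a ν) - g (t • x) μ ν)
          ((∑ a, (deriv (fun s : ℝ => e (s • x) a μ) t * e (t • x) a ν
            + e (t • x) a μ * deriv (fun s : ℝ => e (s • x) a ν) t))
            - deriv (fun s : ℝ => g (s • x) μ ν) t) t :=
        (HasDerivAt.fun_sum fun a _ =>
          ((hEd x a μ t).hasDerivAt).fun_mul ((hEd x a ν t).hasDerivAt)).fun_sub
          ((hGd x μ ν t).hasDerivAt)
      rw [hD.deriv]
      have hA : ∑ a, deriv (fun s : ℝ => e (s • x) a μ) t * e (t • x) a ν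
          = (1/2) * deriv (fun s : ℝ => g (s • x) μ ν) t := by
        calc ∑ a, deriv (fun s : ℝ => e (s • x) a μ) t * e (t • x) a ν
            = ∑ a, ∑ ρ, (1/2) * (deriv (fun s : ℝ => g (s • x) ρ μ) t
                * (einv (t • x) ρ a * e (t • x) a ν)) := by
              refine Finset.sum_congr rfl fun a _ => ?_
              rw [hode x a μ t ht, Finset.mul_sum, Finset.sum_mul]
              refine Finset.sum_congr rfl fun ρ _ => by ring
          _ = ∑ ρ, (1/2) * (deriv (fun s : ℝ => g (s • x) ρ μ) t
                * ∑ a, einv (t • x) ρ a * e (t • x) a ν) := by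
              rw [Finset.sum_comm]
              refine Finset.sum_congr rfl fun ρ _ => ?_
              simp only [Finset.mul_sum]
          _ = (1/2) * deriv (fun s : ℝ => g (s • x) μ ν) t := by
              simp only [hcollapse t]
              rw [Finset.sum_eq_single ν (fun b _ hb => by simp [hb])
                (fun hb => absurd (Finset.mem_univ ν) hb)]
              simp [dGsym x ν μ t]
      have hB : ∑ a, e (t • x) a μ * deriv (fun s : ℝ => e (s • x) a ν) t
          = (1/2) * deriv (fun s : ℝ => g (s • x) μ ν) t := by
        calc ∑ a, e (t • x) a μ * deriv (fun s : ℝ => e (s • x) a ν) t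
            = ∑ a, ∑ ρ, (1/2) * (deriv (fun s : ℝ => g (s • x) ρ ν) t
                * (einv (t • x) ρ a * e (t • x) a μ)) := by
              refine Finset.sum_congr rfl fun a _ => ?_
              rw [hode x a ν t ht, Finset.mul_sum, Finset.mul_sum]
              refine Finset.sum_congr rfl fun ρ _ => by ring
          _ = ∑ ρ, (1/2) * (deriv (fun s : ℝ => g (s • x) ρ ν) t
                * ∑ a, einv (t • x) ρ a * e (t • x) a μ) := by
              rw [Finset.sum_comm]
              refine Finset.sum_congr rfl fun ρ _ => ?_
              simp only [Finset.mul_sum]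
          _ = (1/2) * deriv (fun s : ℝ => g (s • x) μ ν) t := by
              simp only [hcollapse t]
              rw [Finset.sum_eq_single μ (fun b _ hb => by simp [hb])
                (fun hb => absurd (Finset.mem_univ μ) hb)]
              simp
      rw [Finset.sum_add_distrib, hA, hB]
      ring
    have hconst := const01 _ hFdiff hF'
    simp only [one_smul, zero_smul, hzero] at hconst
    rw [hconst]
    congr 1
    simp [Matrix.one_apply, Finset.sum_ite_eq', eq_comm]
  -- polarization : g 0 = 1
  have hA0 : ∀ μ ν, (if μ = ν then (1:ℝ) else 0) - g 0 μ ν = 0 := by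
    set A : Fin n → Fin n → ℝ := fun μ ν => (if μ = ν then (1:ℝ) else 0) - g 0 μ ν with hA
    have hAsym : ∀ μ ν, A μ ν = A ν μ := by
      intro μ ν
      simp only [hA]
      rw [hgsymm 0 μ ν]
      congr 1
      simp [eq_comm]
    have hQ : ∀ x : Fin n → ℝ, ∑ μ, x μ * ∑ ν, x ν * A μ ν = 0 := by
      intro x
      have h1 : ∀ μ, ∑ ν, x ν * A μ ν = (∑ a, e x a μ * x a) - x μ := by
        intro μ
        have : ∀ ν, A μ ν = (∑ a, e x a μ * e x a ν) - g x μ ν :=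
          fun ν => (hF x μ ν).symm
        calc ∑ ν, x ν * A μ ν
            = ∑ ν, (x ν * ∑ a, e x a μ * e x a ν - x ν * g x μ ν) := by
              refine Finset.sum_congr rfl fun ν _ => ?_
              rw [this ν]; ring
          _ = (∑ ν, x ν * ∑ a, e x a μ * e x a ν) - ∑ ν, x ν * g x μ ν :=
              Finset.sum_sub_distrib _ _
          _ = (∑ a, e x a μ * x a) - x μ := by
              congr 1
              · calc ∑ ν, x ν * ∑ a, e x a μ * e x a ν
                    = ∑ ν, ∑ a, e x a μ * (x ν * e x a ν) := by
                      refine Finset.sum_congr rfl fun ν _ => ?_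
                      rw [Finset.mul_sum]
                      exact Finset.sum_congr rfl fun a _ => by ring
                  _ = ∑ a, ∑ ν, e x a μ * (x ν * e x a ν) := Finset.sum_comm
                  _ = ∑ a, e x a μ * x a := by
                      refine Finset.sum_congr rfl fun a _ => ?_
                      rw [← Finset.mul_sum, hone x a]
              · calc ∑ ν, x ν * g x μ ν = ∑ ν, x ν * g x ν μ := by
                      refine Finset.sum_congr rfl fun ν _ => ?_
                      rw [hgsymm x μ ν]
                  _ = x μ := hnormal x μ
      calc ∑ μ, x μ * ∑ ν, x ν * A μ ν
          = ∑ μ, (x μ * ∑ a, e x a μ * x a - x μ * x μ) := by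
            refine Finset.sum_congr rfl fun μ _ => ?_
            rw [h1 μ]; ring
        _ = (∑ μ, x μ * ∑ a, e x a μ * x a) - ∑ μ, x μ * x μ := Finset.sum_sub_distrib _ _
        _ = 0 := by
            have : ∑ μ, x μ * ∑ a, e x a μ * x a = ∑ a, x a * x a := by
              calc ∑ μ, x μ * ∑ a, e x a μ * x a
                  = ∑ μ, ∑ a, x a * (x μ * e x a μ) := by
                    refine Finset.sum_congr rfl fun μ _ => ?_
                    rw [Finset.mul_sum]
                    exact Finset.sum_congr rfl fun a _ => by ring
                _ = ∑ a, ∑ μ, x a * (x μ * e x a μ) := Finset.sum_comm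
                _ = ∑ a, x a * x a := by
                    refine Finset.sum_congr rfl fun a _ => ?_
                    rw [← Finset.mul_sum, hone x a]
            rw [this]
            exact sub_self _
    have hdiag : ∀ μ0, A μ0 μ0 = 0 := by
      intro μ0
      have h := hQ (Pi.single μ0 1)
      rw [hsingle (fun μ => ∑ ν, (Pi.single μ0 1 : Fin n → ℝ) ν * A μ ν) μ0] at h
      rwa [hsingle (A μ0) μ0] at h
    intro μ ν
    show A μ ν = 0
    by_cases hcase : μ = ν
    · subst hcase; exact hdiag μ
    · have h := hQ (Pi.single μ 1 + Pi.single ν 1)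
      simp only [Pi.add_apply, add_mul, mul_add, Finset.sum_add_distrib] at h
      simp only [hsingle] at h
      have h2 := hAsym ν μ
      have h3 := hdiag μ
      have h4 := hdiag ν
      linarith
  -- claim (four)
  have hfour : ∀ (x : Fin n → ℝ) μ ν, g x μ ν = ∑ a, e x a μ * e x a ν := by
    intro x μ ν
    have h1 := hF x μ ν
    have h2 := hA0 μ ν
    linarith
  -- claim (two)
  have htwo : ∀ (x : Fin n → ℝ) μ, ∑ a, x a * e x a μ = x μ := by
    intro x μ
    calc ∑ a, x a * e x a μ
        = ∑ a, (∑ ν, x ν * e x a ν) * e x a μ := by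
          refine Finset.sum_congr rfl fun a _ => ?_
          rw [hone x a]
      _ = ∑ a, ∑ ν, x ν * (e x a ν * e x a μ) := by
          refine Finset.sum_congr rfl fun a _ => ?_
          rw [Finset.sum_mul]
          exact Finset.sum_congr rfl fun ν _ => by ring
      _ = ∑ ν, ∑ a, x ν * (e x a ν * e x a μ) := Finset.sum_comm
      _ = ∑ ν, x ν * ∑ a, e x a ν * e x a μ := by
          refine Finset.sum_congr rfl fun ν _ => ?_
          rw [Finset.mul_sum]
      _ = ∑ ν, x ν * g x ν μ := by
          refine Finset.sum_congr rfl fun ν _ => ?_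
          rw [hfour x ν μ]
      _ = x μ := hnormal x μ
  -- claim (three)
  have hthree : ∀ (x : Fin n → ℝ) a b,
      ∑ μ, einv x μ a * ((∑ ν, x ν * pd ν (fun y => e y b μ) x) + e x b μ)
        = ∑ μ, einv x μ b * ((∑ ν, x ν * pd ν (fun y => e y a μ) x) + e x a μ) := by
    intro x a b
    have hpd : ∀ c μ, (∑ ν, x ν * pd ν (fun y => e y c μ) x)
        = deriv (fun s : ℝ => e (s • x) c μ) 1 :=
      fun c μ => ((ray_hasDeriv _ (hesmooth c μ) x).deriv).symm
    have hD : ∀ c μ, (∑ ν, x ν * pd ν (fun y => e y c μ) x)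
        = (1/2) * ∑ ν, einv x ν c * deriv (fun s : ℝ => g (s • x) ν μ) 1 := by
      intro c μ
      rw [hpd c μ, hode x c μ 1 (Set.mem_Icc.2 ⟨zero_le_one, le_refl 1⟩), one_smul]
    have hee : ∀ c c', ∑ μ, einv x μ c * e x c' μ = if c' = c then (1:ℝ) else 0 := by
      intro c c'
      have h1 : e x * einv x = 1 := mul_eq_one_comm.mp (hinv x)
      calc ∑ μ, einv x μ c * e x c' μ = ∑ μ, e x c' μ * einv x μ c :=
            Finset.sum_congr rfl fun μ _ => mul_comm _ _
        _ = (e x * einv x) c' c := (Matrix.mul_apply).symm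
        _ = if c' = c then (1:ℝ) else 0 := by rw [h1]; simp [Matrix.one_apply]
    have expand : ∀ c c',
        ∑ μ, einv x μ c * ((∑ ν, x ν * pd ν (fun y => e y c' μ) x) + e x c' μ)
          = (∑ μ, ∑ ν, (1/2) * (einv x μ c * (einv x ν c'
              * deriv (fun s : ℝ => g (s • x) ν μ) 1)))
            + (if c' = c then (1:ℝ) else 0) := by
      intro c c'
      calc ∑ μ, einv x μ c * ((∑ ν, x ν * pd ν (fun y => e y c' μ) x) + e x c' μ)
          = ∑ μ, (einv x μ c * ((1/2) * ∑ ν, einv x ν c'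
              * deriv (fun s : ℝ => g (s • x) ν μ) 1) + einv x μ c * e x c' μ) := by
            refine Finset.sum_congr rfl fun μ _ => ?_
            rw [hD c' μ]; ring
        _ = (∑ μ, einv x μ c * ((1/2) * ∑ ν, einv x ν c'
              * deriv (fun s : ℝ => g (s • x) ν μ) 1)) + ∑ μ, einv x μ c * e x c' μ :=
            Finset.sum_add_distrib
        _ = (∑ μ, ∑ ν, (1/2) * (einv x μ c * (einv x ν c'
              * deriv (fun s : ℝ => g (s • x) ν μ) 1)))
            + (if c' = c then (1:ℝ) else 0) := by
            rw [hee c c']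
            congr 1
            refine Finset.sum_congr rfl fun μ _ => ?_
            simp only [Finset.mul_sum]
            exact Finset.sum_congr rfl fun ν _ => by ring
    rw [expand a b, expand b a]
    congr 1
    · rw [Finset.sum_comm]
      refine Finset.sum_congr rfl fun κ _ => Finset.sum_congr rfl fun ρ _ => ?_
      rw [dGsym x κ ρ 1]
      ring
    · simp [eq_comm]
  exact ⟨hone, htwo, hthree, hfour⟩
end
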